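/- arXiv:1804.03823 — 4 statements merged into one kernel-verified Lean document; each statement's English description precedes it below -/
import Mathlib

section
/- Let I be a TGICP such that for some i ∈ {1,2}, mrk_q(F̃_x^{(i)}) = mrk_q(F_x^{(i)}) (i.e., the SGICP F̃_x^{(i)} is a rank-invariant extension of F_x^{(i)}, as holds for the rank-invariant extensions derivable as special cases of the joint-extension theorem). Then l*_q(I) = mrk_1 + mrk_2. -/
open scoped Classical

/-- `A ≈ F_x`: the matrix `A` completes the fitting matrix of the SGICP with demand map `f`
and side-information sets `χ`, i.e. `A` equals `1` at every demand entry and `0` at every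
entry which is neither a demand entry nor a side-information entry. -/
def Completes {K : Type*} [Field K] {R M : Type*} (f : R → M) (χ : R → Set M)
    (A : Matrix R M K) : Prop :=
  (∀ i, A i (f i) = 1) ∧ ∀ i j, j ≠ f i → j ∉ χ i → A i j = 0

/-- `mrk_q(F_x)`: the minrank over `K` of the SGICP with demand map `f` and side
information `χ` — the minimum rank of a matrix completing its fitting matrix. -/
noncomputable def minrk (K : Type*) [Field K] {R M : Type*} [Fintype M]
    (f : R → M) (χ : R → Set M) : ℕ :=
  sInf {r | ∃ A : Matrix R M K, Completes f χ A ∧ A.rank = r}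

section Helpers

variable {K : Type*} [Field K]

/-- sum over a subtype of a function supported on the set equals the full sum -/
lemma sum_subtype_of_support {α : Type*} [Fintype α] (s : Set α) [Fintype ↥s] (F : α → K)
    (h : ∀ j, j ∉ s → F j = 0) : ∑ j : s, F j.1 = ∑ j : α, F j := by
  rw [Finset.sum_set_coe (f := F)]
  exact Finset.sum_subset (Finset.subset_univ _) (by
    intro x _ hx
    exact h x (by simpa using hx))

lemma minrk_set_nonempty {R M : Type*} [Fintype M] (f : R → M) (χ : R → Set M) :
    {r | ∃ A : Matrix R M K, Completes f χ A ∧ A.rank = r}.Nonempty := by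
  refine ⟨_, (fun i j => if j = f i then 1 else 0), ⟨fun i => if_pos rfl, ?_⟩, rfl⟩
  intro i j hj _
  exact if_neg hj

lemma exists_min_completion {R M : Type*} [Fintype M] (f : R → M) (χ : R → Set M) :
    ∃ A : Matrix R M K, Completes f χ A ∧ A.rank = minrk K f χ :=
  Nat.sInf_mem (minrk_set_nonempty f χ)

/-- Lower bound: if the demands are linearly decodable from `G.mulVec x` and side info,
then `minrk ≤ l`. -/
lemma minrk_le_of_ker {R M : Type*} [Fintype M] (f : R → M) (χ : R → Set M)
    (hnm : ∀ i, f i ∉ χ i) {l : ℕ} (G : Matrix (Fin l) M K)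
    (hker : ∀ i (x : M → K), G.mulVec x = 0 → (∀ j, j ∈ χ i → x j = 0) → x (f i) = 0) :
    minrk K f χ ≤ l := by
  classical
  -- for each receiver, the demand functional is in the span of the code functionals and
  -- the side-information functionals
  have key : ∀ i : R, ∃ c : (Fin l ⊕ (χ i : Set M)) → K, ∀ j : M,
      (∑ k : Fin l, c (Sum.inl k) * G k j)
        + (∑ j' : (χ i : Set M), c (Sum.inr j') * (Pi.single j 1 : M → K) j'.1)
        = (Pi.single j 1 : M → K) (f i) := by
    intro i
    set L : (Fin l ⊕ (χ i : Set M)) → ((M → K) →ₗ[K] K) :=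
      Sum.elim (fun k => (LinearMap.proj k).comp G.mulVecLin)
        (fun j' => LinearMap.proj j'.1) with hL
    have hsub : ⨅ t, LinearMap.ker (L t) ≤ LinearMap.ker (LinearMap.proj (R := K)
        (φ := fun _ : M => K) (f i)) := by
      intro x hx
      simp only [Submodule.mem_iInf, LinearMap.mem_ker] at hx
      have h1 : G.mulVec x = 0 := by
        funext k
        exact hx (Sum.inl k)
      have h2 : ∀ j, j ∈ χ i → x j = 0 := fun j hj => hx (Sum.inr ⟨j, hj⟩)
      exact hker i x h1 h2
    have hmem := mem_span_of_iInf_ker_le_ker hsub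
    obtain ⟨c, hc⟩ := (Submodule.mem_span_range_iff_exists_fun K).1 hmem
    refine ⟨c, fun j => ?_⟩
    have := congrArg (fun (φ : (M → K) →ₗ[K] K) => φ (Pi.single j 1)) hc
    simp only [LinearMap.coe_sum, Finset.sum_apply, LinearMap.smul_apply,
      smul_eq_mul, LinearMap.proj_apply] at this
    rw [Fintype.sum_sum_type] at this
    convert this using 2 <;> simp [hL, Matrix.mulVecLin_apply]
  choose c hc using key
  set A : Matrix R M K := Matrix.of (fun i => fun j => ∑ k : Fin l, c i (Sum.inl k) * G k j)
    with hA
  have hAC : A = (Matrix.of fun i k => c i (Sum.inl k)) * G := by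
    ext i j
    simp [hA, Matrix.mul_apply]
  have hcomp : Completes f χ A := by
    constructor
    · intro i
      have := hc i (f i)
      have h2 : (∑ j' : (χ i : Set M), c i (Sum.inr j') * (Pi.single (f i) 1 : M → K) j'.1) = 0 := by
        refine Finset.sum_eq_zero fun j' _ => ?_
        rw [Pi.single_apply, if_neg, mul_zero]
        intro hj'
        exact hnm i (hj' ▸ j'.2)
      rw [h2, add_zero] at this
      simpa [hA, Pi.single_apply] using this
    · intro i j hj hjχ
      have := hc i j
      have h2 : (∑ j' : (χ i : Set M), c i (Sum.inr j') * (Pi.single j 1 : M → K) j'.1) = 0 := by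
        refine Finset.sum_eq_zero fun j' _ => ?_
        rw [Pi.single_apply, if_neg, mul_zero]
        intro hj'
        exact hjχ (hj' ▸ j'.2)
      rw [h2, add_zero] at this
      have h3 : (Pi.single j 1 : M → K) (f i) = 0 := by
        rw [Pi.single_apply, if_neg]
        exact fun hh => hj hh.symm
      rw [h3] at this
      simpa [hA] using this
  calc minrk K f χ ≤ A.rank := Nat.sInf_le ⟨A, hcomp, rfl⟩
    _ ≤ G.rank := hAC ▸ Matrix.rank_mul_le_right _ _
    _ ≤ Fintype.card (Fin l) := Matrix.rank_le_card_height G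
    _ = l := Fintype.card_fin l

/-- Upper bound: from a completion `A` one builds a linear code of length `A.rank`. -/
lemma exists_code_of_completes {R M : Type*} [Fintype R] [Fintype M] (f : R → M)
    (χ : R → Set M) (hnm : ∀ i, f i ∉ χ i) (A : Matrix R M K) (hA : Completes f χ A) :
    ∃ G : Matrix (Fin A.rank) M K, ∀ i, ∃ D : (Fin A.rank → K) → (↥(χ i) → K) → K,
      ∀ x : M → K, D (G.mulVec x) (fun j => x j.1) = x (f i) := by
  classical
  set W : Submodule K (M → K) := Submodule.span K (Set.range A) with hW
  have hrk : A.rank = Module.finrank K W := Matrix.rank_eq_finrank_span_row A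
  let b : Module.Basis (Fin A.rank) K W := (Module.finBasis K W).reindex (finCongr hrk.symm)
  set G : Matrix (Fin A.rank) M K := Matrix.of (fun k => (b k : M → K)) with hG
  have hspan : Submodule.span K (Set.range G) = W := by
    have : Set.range (G : Fin A.rank → M → K) = W.subtype '' Set.range b := by
      rw [← Set.range_comp]; rfl
    rw [this, Submodule.span_image, b.span_eq, Submodule.map_top, Submodule.range_subtype]
  refine ⟨G, fun i => ?_⟩
  have hAi : A i ∈ Submodule.span K (Set.range (G : Fin A.rank → M → K)) := by
    rw [hspan]
    exact Submodule.subset_span (Set.mem_range_self i)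
  obtain ⟨c, hc⟩ := (Submodule.mem_span_range_iff_exists_fun K).1 hAi
  refine ⟨fun y s => (∑ k, c k * y k)
    - ∑ j : M, if h : j ∈ χ i then A i j * s ⟨j, h⟩ else 0, fun x => ?_⟩
  have h1 : (∑ k, c k * (G.mulVec x) k) = ∑ j : M, A i j * x j := by
    simp only [Matrix.mulVec, dotProduct, Finset.mul_sum]
    rw [Finset.sum_comm]
    refine Finset.sum_congr rfl fun j _ => ?_
    have : A i j = ∑ k, c k * G k j := by
      rw [← hc]
      simp [Finset.sum_apply]
    rw [this, Finset.sum_mul]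
    exact Finset.sum_congr rfl fun k _ => by ring
  dsimp only
  rw [h1]
  have h2 : (∑ j : M, if h : j ∈ χ i then A i j * x j else 0)
      = ∑ j : M, if j ∈ χ i then A i j * x j else 0 := by
    refine Finset.sum_congr rfl fun j _ => ?_
    by_cases h : j ∈ χ i <;> simp [h]
  rw [h2, ← Finset.sum_sub_distrib]
  have h3 : ∀ j : M, (A i j * x j - if j ∈ χ i then A i j * x j else 0)
      = if j = f i then x j else 0 := by
    intro j
    by_cases hj : j ∈ χ i
    · rw [if_pos hj, if_neg (fun hh => hnm i (by rw [← hh]; exact hj)), sub_self]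
    · rw [if_neg hj, sub_zero]
      by_cases hf : j = f i
      · rw [if_pos hf, hf, hA.1 i, one_mul]
      · rw [if_neg hf, hA.2 i j hf hj, zero_mul]
  rw [Finset.sum_congr rfl fun j _ => h3 j]
  simp

lemma minrk_inst_irrel {R M : Type*} (i1 : Fintype M) [i2 : Fintype M]
    (f : R → M) (χ : R → Set M) : @minrk K _ R M i1 f χ = minrk K f χ := by
  cases Subsingleton.elim i1 i2
  rfl

end Helpers

/-- A two-sender groupcast index coding problem (TGICP) with `m` messages and `n` receivers.
Sender `j` holds the messages indexed by `Mj`, receiver `i` demands message `f i` and has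
side information `χ i`; every message is demanded by at least one receiver. -/
structure TGICP (m n : ℕ) where
  /-- indices of the messages available at sender 1 -/
  M1 : Set (Fin m)
  /-- indices of the messages available at sender 2 -/
  M2 : Set (Fin m)
  cover : M1 ∪ M2 = Set.univ
  /-- demand map -/
  f : Fin n → Fin m
  /-- side-information sets -/
  χ : Fin n → Set (Fin m)
  not_mem : ∀ i, f i ∉ χ i
  surj : ∀ j, ∃ i, f i = j

namespace TGICP

variable {m n : ℕ}

/-- `(G1, G2)` is a valid scalar linear two-sender index code over `K`: each receiver can
decode its demanded message from the two transmitted codewords together with its side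
information. -/
def IsCode (I : TGICP m n) (K : Type*) [Field K] {l1 l2 : ℕ}
    (G1 : Matrix (Fin l1) ↥I.M1 K) (G2 : Matrix (Fin l2) ↥I.M2 K) : Prop :=
  ∀ i : Fin n, ∃ D : (Fin l1 → K) → (Fin l2 → K) → (↥(I.χ i) → K) → K,
    ∀ x : Fin m → K,
      D (G1.mulVec fun j => x j.1) (G2.mulVec fun j => x j.1) (fun j => x j.1) = x (I.f i)

/-- `l*_q(I)`: the optimal (minimum) aggregate length of a scalar linear two-sender index
code for `I` over `K`. -/
noncomputable def optLen (I : TGICP m n) (K : Type*) [Field K] : ℕ :=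
  sInf {L | ∃ (l1 l2 : ℕ) (G1 : Matrix (Fin l1) ↥I.M1 K) (G2 : Matrix (Fin l2) ↥I.M2 K),
    I.IsCode K G1 G2 ∧ L = l1 + l2}

/-- The minrank over `K` of the single-sender sub-problem of `I` with message set `P`:
its receivers are those demanding a message in `P`, with side information restricted
to `P`. -/
noncomputable def mrk (I : TGICP m n) (K : Type*) [Field K] (P : Set (Fin m)) : ℕ :=
  minrk K (fun i : {i : Fin n // I.f i ∈ P} => (⟨I.f i.1, i.2⟩ : ↥P))
    (fun i => {j : ↥P | j.1 ∈ I.χ i.1})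

end TGICP

namespace TGICP

variable {K : Type*} [Field K] {m n : ℕ}

/-- The TGICP with the two senders interchanged. -/
def swap (I : TGICP m n) : TGICP m n where
  M1 := I.M2
  M2 := I.M1
  cover := by rw [Set.union_comm]; exact I.cover
  f := I.f
  χ := I.χ
  not_mem := I.not_mem
  surj := I.surj

lemma codeSet_subset (I : TGICP m n) :
    {L | ∃ (l1 l2 : ℕ) (G1 : Matrix (Fin l1) ↥I.swap.M1 K) (G2 : Matrix (Fin l2) ↥I.swap.M2 K),
      I.swap.IsCode K G1 G2 ∧ L = l1 + l2} ⊆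
    {L | ∃ (l1 l2 : ℕ) (G1 : Matrix (Fin l1) ↥I.M1 K) (G2 : Matrix (Fin l2) ↥I.M2 K),
      I.IsCode K G1 G2 ∧ L = l1 + l2} := by
  rintro L ⟨l1, l2, G1, G2, hc, rfl⟩
  refine ⟨l2, l1, G2, G1, fun i => ?_, add_comm l1 l2⟩
  obtain ⟨D, hD⟩ := hc i
  exact ⟨fun y1 y2 s => D y2 y1 s, hD⟩

lemma optLen_swap (I : TGICP m n) : I.swap.optLen K = I.optLen K := by
  unfold optLen
  congr 1
  exact Set.Subset.antisymm (codeSet_subset I) (codeSet_subset I.swap)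

/-- Lower bound for sender 1. -/
lemma mrk_le_l1 (I : TGICP m n) {l1 l2 : ℕ} (G1 : Matrix (Fin l1) ↥I.M1 K)
    (G2 : Matrix (Fin l2) ↥I.M2 K) (hcode : I.IsCode K G1 G2) :
    I.mrk K (I.M1 \ I.M2) ≤ l1 := by
  unfold mrk
  rw [minrk_inst_irrel]
  refine minrk_le_of_ker _ _ (fun i hi => I.not_mem i.1 hi)
    (Matrix.of fun k (j : ↥(I.M1 \ I.M2)) => G1 k ⟨j.1, j.2.1⟩) ?_
  intro i x hGx hside
  set xbar : Fin m → K := fun j => if h : j ∈ I.M1 \ I.M2 then x ⟨j, h⟩ else 0 with hxbar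
  obtain ⟨D, hD⟩ := hcode i.1
  have h0 := hD (fun _ => 0)
  have hx := hD xbar
  have e1 : (G1.mulVec fun j : ↥I.M1 => xbar j.1)
      = G1.mulVec (fun j : ↥I.M1 => (fun _ : Fin m => (0:K)) j.1) := by
    funext k
    simp only [Matrix.mulVec, dotProduct, mul_zero, Finset.sum_const_zero]
    have hA : (∑ j : ↥I.M1, G1 k j * xbar j.1) = ∑ j : ↥I.M1,
        (if h : (j : Fin m) ∈ I.M1 \ I.M2 then G1 k ⟨(j : Fin m), h.1⟩ * x ⟨(j : Fin m), h⟩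
          else 0) := by
      refine Finset.sum_congr rfl fun j _ => ?_
      simp only [hxbar]
      by_cases h : (j : Fin m) ∈ I.M1 \ I.M2
      · rw [dif_pos h, dif_pos h]
      · rw [dif_neg h, dif_neg h, mul_zero]
    have hB : (∑ j : ↥I.M1,
        (if h : (j : Fin m) ∈ I.M1 \ I.M2 then G1 k ⟨(j : Fin m), h.1⟩ * x ⟨(j : Fin m), h⟩
          else 0)) = ∑ j : Fin m,
        (if h : j ∈ I.M1 \ I.M2 then G1 k ⟨j, h.1⟩ * x ⟨j, h⟩ else 0) :=
      sum_subtype_of_support I.M1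
        (fun j => if h : j ∈ I.M1 \ I.M2 then G1 k ⟨j, h.1⟩ * x ⟨j, h⟩ else 0)
        (fun j hj => dif_neg (fun hh => hj hh.1))
    have hC : (∑ j : Fin m,
        (if h : j ∈ I.M1 \ I.M2 then G1 k ⟨j, h.1⟩ * x ⟨j, h⟩ else 0)) = ∑ j : ↥(I.M1 \ I.M2),
        (if h : (j : Fin m) ∈ I.M1 \ I.M2 then G1 k ⟨(j : Fin m), h.1⟩ * x ⟨(j : Fin m), h⟩
          else 0) :=
      (sum_subtype_of_support (I.M1 \ I.M2)
        (fun j => if h : j ∈ I.M1 \ I.M2 then G1 k ⟨j, h.1⟩ * x ⟨j, h⟩ else 0)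
        (fun j hj => dif_neg hj)).symm
    have hDd : (∑ j : ↥(I.M1 \ I.M2),
        (if h : (j : Fin m) ∈ I.M1 \ I.M2 then G1 k ⟨(j : Fin m), h.1⟩ * x ⟨(j : Fin m), h⟩
          else 0)) = ∑ j : ↥(I.M1 \ I.M2), G1 k ⟨(j : Fin m), j.2.1⟩ * x j := by
      refine Finset.sum_congr rfl fun j _ => ?_
      rw [dif_pos j.2]
    have h5 := congrFun hGx k
    simp only [Matrix.mulVec, dotProduct, Matrix.of_apply, Pi.zero_apply] at h5
    rw [hA, hB, hC, hDd]
    exact h5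
  have e2 : (fun j : ↥I.M2 => xbar j.1) = (fun j : ↥I.M2 => (fun _ : Fin m => (0:K)) j.1) := by
    funext j
    simp only [hxbar]
    exact dif_neg (fun hh => hh.2 j.2)
  have e3 : (fun j : ↥(I.χ i.1) => xbar j.1)
      = (fun j : ↥(I.χ i.1) => (fun _ : Fin m => (0:K)) j.1) := by
    funext j
    simp only [hxbar]
    by_cases h : (j : Fin m) ∈ I.M1 \ I.M2
    · rw [dif_pos h]
      exact hside ⟨j.1, h⟩ j.2
    · exact dif_neg h
  rw [e1, e2, e3, h0] at hx
  have : xbar (I.f i.1) = x ⟨I.f i.1, i.2⟩ := by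
    simp only [hxbar]
    rw [dif_pos i.2]
  rw [this] at hx
  exact hx.symm

/-- Lower bound for sender 2, by symmetry. -/
lemma mrk_le_l2 (I : TGICP m n) {l1 l2 : ℕ} (G1 : Matrix (Fin l1) ↥I.M1 K)
    (G2 : Matrix (Fin l2) ↥I.M2 K) (hcode : I.IsCode K G1 G2) :
    I.mrk K (I.M2 \ I.M1) ≤ l2 := by
  refine mrk_le_l1 (I.swap) G2 G1 (fun i => ?_)
  obtain ⟨D, hD⟩ := hcode i
  exact ⟨fun y1 y2 s => D y2 y1 s, hD⟩

/-- An optimal combined code: sender 1 serves all receivers demanding a message of `M1`,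
sender 2 the remaining ones. -/
lemma code_mem (I : TGICP m n) :
    (I.mrk K I.M1 + I.mrk K (I.M2 \ I.M1)) ∈
      {L | ∃ (l1 l2 : ℕ) (G1 : Matrix (Fin l1) ↥I.M1 K) (G2 : Matrix (Fin l2) ↥I.M2 K),
        I.IsCode K G1 G2 ∧ L = l1 + l2} := by
  obtain ⟨A1, hA1, hA1r⟩ := exists_min_completion (K := K)
    (fun i : {i : Fin n // I.f i ∈ I.M1} => (⟨I.f i.1, i.2⟩ : ↥I.M1))
    (fun i => {j : ↥I.M1 | j.1 ∈ I.χ i.1})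
  obtain ⟨G1, hG1⟩ := exists_code_of_completes _ _ (fun i hi => I.not_mem i.1 hi) A1 hA1
  obtain ⟨A2, hA2, hA2r⟩ := exists_min_completion (K := K)
    (fun i : {i : Fin n // I.f i ∈ I.M2 \ I.M1} => (⟨I.f i.1, i.2⟩ : ↥(I.M2 \ I.M1)))
    (fun i => {j : ↥(I.M2 \ I.M1) | j.1 ∈ I.χ i.1})
  obtain ⟨G2', hG2'⟩ := exists_code_of_completes _ _ (fun i hi => I.not_mem i.1 hi) A2 hA2
  refine ⟨A1.rank, A2.rank, G1,
    Matrix.of (fun k (j : ↥I.M2) => if h : j.1 ∈ I.M2 \ I.M1 then G2' k ⟨j.1, h⟩ else 0),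
    ?_, by
      unfold mrk
      rw [hA1r, hA2r]
      congr 1 <;> exact minrk_inst_irrel _ _ _⟩
  intro i
  by_cases hc : I.f i ∈ I.M1
  · obtain ⟨D', hD'⟩ := hG1 ⟨i, hc⟩
    exact ⟨fun y1 _ s => D' y1 (fun j => s ⟨j.1.1, j.2⟩), fun x => hD' (fun j => x j.1)⟩
  · have hc2 : I.f i ∈ I.M2 \ I.M1 := by
      refine ⟨?_, hc⟩
      have hu : I.f i ∈ I.M1 ∪ I.M2 := by rw [I.cover]; exact Set.mem_univ _
      exact hu.resolve_left hc
    obtain ⟨D', hD'⟩ := hG2' ⟨i, hc2⟩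
    refine ⟨fun _ y2 s => D' y2 (fun j => s ⟨j.1.1, j.2⟩), fun x => ?_⟩
    have hmv : ((Matrix.of (fun k (j : ↥I.M2) =>
          if h : j.1 ∈ I.M2 \ I.M1 then G2' k ⟨j.1, h⟩ else 0)).mulVec
            fun j : ↥I.M2 => x j.1)
        = G2'.mulVec (fun j : ↥(I.M2 \ I.M1) => x j.1) := by
      funext k
      simp only [Matrix.mulVec, dotProduct, Matrix.of_apply]
      have hA : (∑ j : ↥I.M2,
          (if h : (j : Fin m) ∈ I.M2 \ I.M1 then G2' k ⟨(j : Fin m), h⟩ else 0) * x j.1)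
          = ∑ j : ↥I.M2, (if h : (j : Fin m) ∈ I.M2 \ I.M1
            then G2' k ⟨(j : Fin m), h⟩ * x (j : Fin m) else 0) := by
        refine Finset.sum_congr rfl fun j _ => ?_
        by_cases h : (j : Fin m) ∈ I.M2 \ I.M1
        · rw [dif_pos h, dif_pos h]
        · rw [dif_neg h, dif_neg h, zero_mul]
      have hB : (∑ j : ↥I.M2, (if h : (j : Fin m) ∈ I.M2 \ I.M1
            then G2' k ⟨(j : Fin m), h⟩ * x (j : Fin m) else 0))
          = ∑ j : Fin m, (if h : j ∈ I.M2 \ I.M1 then G2' k ⟨j, h⟩ * x j else 0) :=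
        sum_subtype_of_support I.M2
          (fun j => if h : j ∈ I.M2 \ I.M1 then G2' k ⟨j, h⟩ * x j else 0)
          (fun j hj => dif_neg (fun hh => hj hh.1))
      have hC : (∑ j : Fin m, (if h : j ∈ I.M2 \ I.M1 then G2' k ⟨j, h⟩ * x j else 0))
          = ∑ j : ↥(I.M2 \ I.M1), (if h : (j : Fin m) ∈ I.M2 \ I.M1
            then G2' k ⟨(j : Fin m), h⟩ * x (j : Fin m) else 0) :=
        (sum_subtype_of_support (I.M2 \ I.M1)
          (fun j => if h : j ∈ I.M2 \ I.M1 then G2' k ⟨j, h⟩ * x j else 0)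
          (fun j hj => dif_neg hj)).symm
      have hDd : (∑ j : ↥(I.M2 \ I.M1), (if h : (j : Fin m) ∈ I.M2 \ I.M1
            then G2' k ⟨(j : Fin m), h⟩ * x (j : Fin m) else 0))
          = ∑ j : ↥(I.M2 \ I.M1), G2' k j * x j.1 := by
        refine Finset.sum_congr rfl fun j _ => ?_
        rw [dif_pos j.2]
      rw [hA, hB, hC, hDd]
    show D' ((Matrix.of (fun k (j : ↥I.M2) =>
        if h : j.1 ∈ I.M2 \ I.M1 then G2' k ⟨j.1, h⟩ else 0)).mulVec
          fun j : ↥I.M2 => x j.1) (fun j => x j.1.1) = x (I.f i)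
    rw [hmv]
    exact hD' (fun j => x j.1)

lemma key (I : TGICP m n) (h1 : I.mrk K I.M1 = I.mrk K (I.M1 \ I.M2)) :
    I.optLen K = I.mrk K (I.M1 \ I.M2) + I.mrk K (I.M2 \ I.M1) := by
  unfold optLen
  refine le_antisymm ((Nat.sInf_le (code_mem (K := K) I)).trans ?_) ?_
  · exact add_le_add h1.le (le_refl _)
  · refine le_csInf ⟨_, code_mem (K := K) I⟩ ?_
    rintro L ⟨l1, l2, G1, G2, hcode, rfl⟩
    exact add_le_add (mrk_le_l1 I G1 G2 hcode) (mrk_le_l2 I G1 G2 hcode)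

end TGICP

/-- Case II-B via rank-invariant extensions.
Let `I` be a TGICP such that for some `i ∈ {1,2}` the SGICP `F̃_x^(i)` formed by the
receivers of `I_i` and `I_{12}` together (message set `P_i ∪ P_{12}`) is a rank-invariant
extension of `F_x^(i)`, i.e. `mrk_q(F̃_x^(i)) = mrk_q(F_x^(i))`.  Then
`l*_q(I) = mrk_1 + mrk_2`. -/
theorem stmt12 (K : Type*) [Field K] [Fintype K] {m n : ℕ} (I : TGICP m n)
    (h : I.mrk K ((I.M1 \ I.M2) ∪ (I.M1 ∩ I.M2)) = I.mrk K (I.M1 \ I.M2) ∨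
      I.mrk K ((I.M2 \ I.M1) ∪ (I.M1 ∩ I.M2)) = I.mrk K (I.M2 \ I.M1)) :
    I.optLen K = I.mrk K (I.M1 \ I.M2) + I.mrk K (I.M2 \ I.M1) := by
  rcases h with hl | hr
  · rw [Set.diff_union_inter] at hl
    exact I.key hl
  · rw [Set.inter_comm, Set.diff_union_inter] at hr
    have hswap := I.swap.key (K := K)
      (show I.swap.mrk K I.swap.M1 = I.swap.mrk K (I.swap.M1 \ I.swap.M2) from hr)
    rw [I.optLen_swap (K := K)] at hswap
    rw [hswap]
    exact add_comm _ _
end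

section
/- Let I be a TGICP such that: (a) mrk_q(F̃_x) = max{mrk_1, mrk_{12}}, where F̃_x is the fitting matrix of the SGICP formed by the receivers of I_1 and I_{12} together with message set P_1 ∪ P_{12} (as holds when F̃_x is a joint extension of F_x^{(1)} and F_x^{(12)} of the type constructed in the joint-extension theorem with minrank-achieving completions, in particular when all interactions between I_1 and I_{12} are fully-participated); and (b) either no receiver with demand in P_2 has side information in P_{12}, or no receiver with demand in P_{12} has side information in P_2 (Case II-C: at most one of the interactions I_2 → I_{12}, I_{12} → I_2 exists). Then l*_q(I) = mrk_2 + max{mrk_1, mrk_{12}}. -/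
open scoped Classical

set_option linter.unusedSectionVars false
set_option maxHeartbeats 1000000

open Module Submodule

section Aux
variable {K : Type*} [Field K] {ι : Type*} [Fintype ι]

lemma dual_pi_eq_sum (ψ : (ι → K) →ₗ[K] K) (v : ι → K) :
    ψ v = ∑ j, v j * ψ (Pi.single j (1 : K)) := by
  have hv : v = ∑ j, v j • (Pi.single j 1 : ι → K) := by
    ext k
    simp [Pi.single_apply, Finset.sum_apply]
  conv_lhs => rw [hv]
  simp [map_sum, map_smul, smul_eq_mul]

/-- Dot-product separation: if `u` is not in a submodule `T` of `ι → K`, there is a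
vector `w` orthogonal to `T` with `u ⬝ᵥ w ≠ 0`. -/
lemma exists_ortho_of_not_mem {T : Submodule K (ι → K)} {u : ι → K} (hu : u ∉ T) :
    ∃ w : ι → K, (∀ t ∈ T, ∑ j, t j * w j = 0) ∧ ∑ j, u j * w j ≠ 0 := by
  have h0 : T.mkQ u ≠ 0 := by
    simpa [Submodule.mkQ_apply, Submodule.Quotient.mk_eq_zero] using hu
  have : ¬ (∀ φ : Module.Dual K ((ι → K) ⧸ T), φ (T.mkQ u) = 0) := by
    rw [Module.forall_dual_apply_eq_zero_iff]; exact h0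
  push_neg at this
  obtain ⟨φ, hφ⟩ := this
  set ψ : (ι → K) →ₗ[K] K := φ.comp T.mkQ with hψdef
  refine ⟨fun j => ψ (Pi.single j 1), fun t ht => ?_, ?_⟩
  · rw [← dual_pi_eq_sum ψ t]
    simp [hψdef, (Submodule.Quotient.mk_eq_zero T).2 ht]
  · rw [← dual_pi_eq_sum ψ u]
    exact hφ

/-- zero-extension of a function on a subtype, as a linear map. -/
noncomputable def extL (K : Type*) [Field K] (P : Set ι) : (↥P → K) →ₗ[K] (ι → K) where
  toFun a := fun j => if h : j ∈ P then a ⟨j, h⟩ else 0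
  map_add' a b := by ext j; by_cases h : j ∈ P <;> simp [h]
  map_smul' c a := by ext j; by_cases h : j ∈ P <;> simp [h]

lemma extL_apply {P : Set ι} (a : ↥P → K) (j : ι) :
    extL K P a j = if h : j ∈ P then a ⟨j, h⟩ else 0 := rfl

lemma extL_injective (P : Set ι) : Function.Injective (extL K P) := by
  intro a b hab
  ext j
  have := congrFun hab j.1
  simpa [extL_apply, j.2] using this

/-- zero-extension between nested subtypes, as a linear map. -/
noncomputable def extL2 (K : Type*) [Field K] (P Q : Set ι) : (↥P → K) →ₗ[K] (↥Q → K) where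
  toFun a := fun j => if h : j.1 ∈ P then a ⟨j.1, h⟩ else 0
  map_add' a b := by ext j; by_cases h : j.1 ∈ P <;> simp [h]
  map_smul' c a := by ext j; by_cases h : j.1 ∈ P <;> simp [h]

lemma extL2_apply {P Q : Set ι} (a : ↥P → K) (j : ↥Q) :
    extL2 K P Q a j = if h : j.1 ∈ P then a ⟨j.1, h⟩ else 0 := rfl

lemma extL2_injective {P Q : Set ι} (hPQ : P ⊆ Q) : Function.Injective (extL2 K P Q) := by
  intro a b hab
  ext j
  have := congrFun hab ⟨j.1, hPQ j.2⟩
  simpa [extL2_apply, j.2] using this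

/-- coordinate projection onto a set of indices, as a linear map. -/
noncomputable def projL (K : Type*) [Field K] (P : Set ι) : (ι → K) →ₗ[K] (ι → K) where
  toFun x := fun j => if j ∈ P then x j else 0
  map_add' a b := by ext j; by_cases h : j ∈ P <;> simp [h]
  map_smul' c a := by ext j; by_cases h : j ∈ P <;> simp [h]

lemma projL_apply {P : Set ι} (x : ι → K) (j : ι) :
    projL K P x j = if j ∈ P then x j else 0 := rfl

/-- the submodule of functions supported inside `P`. -/
noncomputable def suppSub (K : Type*) [Field K] (P : Set ι) : Submodule K (ι → K) where
  carrier := {x | ∀ j ∉ P, x j = 0}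
  add_mem' := by intro a b ha hb j hj; simp [ha j hj, hb j hj]
  zero_mem' := by intro j hj; rfl
  smul_mem' := by intro c a ha j hj; simp [ha j hj]

lemma mem_suppSub {P : Set ι} {x : ι → K} : x ∈ suppSub K P ↔ ∀ j ∉ P, x j = 0 := Iff.rfl

lemma sum_of_support_subset (P : Set ι) (g : ι → K) (hg : ∀ j ∉ P, g j = 0) :
    ∑ j, g j = ∑ j : ↥P, g j.1 := by
  rw [← Finset.sum_subtype (Finset.univ.filter (· ∈ P))
      (fun x => by simp) g]
  refine (Finset.sum_subset (Finset.filter_subset _ _) ?_).symm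
  intro x _ hx
  exact hg x (by simpa using hx)

lemma sum_extL (P : Set ι) (a : ↥P → K) (w : ι → K) :
    ∑ j, extL K P a j * w j = ∑ j : ↥P, a j * w j.1 := by
  rw [sum_of_support_subset P _ (fun j hj => by simp [extL_apply, hj])]
  refine Finset.sum_congr rfl fun j _ => ?_
  simp [extL_apply, j.2]

/-- rank of a matrix is the dimension of its row space. -/
lemma rank_eq_finrank_span_rows {R C : Type*} [Fintype R] [Fintype C]
    (A : Matrix R C K) : A.rank = finrank K (span K (Set.range A)) := by
  rw [← Matrix.rank_transpose, Matrix.rank_eq_finrank_span_cols]; rfl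

lemma finrank_span_range_comp_eq {V W : Type*} [AddCommGroup V] [Module K V]
    [AddCommGroup W] [Module K W] (E : V →ₗ[K] W) (hE : Function.Injective E)
    {R : Type*} (r : R → V) :
    finrank K (span K (Set.range (fun i => E (r i)))) = finrank K (span K (Set.range r)) := by
  have h1 : Set.range (fun i => E (r i)) = E '' Set.range r := by
    rw [← Set.range_comp]; rfl
  rw [h1, ← Submodule.map_span]
  exact (LinearEquiv.finrank_eq (Submodule.equivMapOfInjective E hE _)).symm

end Aux

namespace TGICP

variable {K : Type*} [Field K] {m n : ℕ}

lemma mrk_le_finrank_span (I : TGICP m n) (P : Set (Fin m))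
    (z : {i : Fin n // I.f i ∈ P} → (Fin m → K))
    (h1 : ∀ i, z i (I.f i.1) = 1)
    (h0 : ∀ i, ∀ j, j ≠ I.f i.1 → j ∉ I.χ i.1 → z i j = 0)
    (hsupp : ∀ i, ∀ j, j ∉ P → z i j = 0) :
    I.mrk K P ≤ finrank K (span K (Set.range z)) := by
  classical
  set A : Matrix {i : Fin n // I.f i ∈ P} ↥P K := Matrix.of fun i j => z i j.1 with hA
  have hC : Completes (fun i : {i : Fin n // I.f i ∈ P} => (⟨I.f i.1, i.2⟩ : ↥P))
      (fun i => {j : ↥P | j.1 ∈ I.χ i.1}) A := by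
    refine ⟨fun i => h1 i, fun i j hj hjχ => ?_⟩
    exact h0 i j.1 (fun h => hj (Subtype.ext h)) hjχ
  have hext : (fun i => extL K P (A i)) = z := by
    funext i; ext j
    by_cases h : j ∈ P
    · simp [extL_apply, h, hA]
    · simp [extL_apply, h, hsupp i j h]
  have hrank : A.rank = finrank K (span K (Set.range z)) := by
    rw [rank_eq_finrank_span_rows,
      ← finrank_span_range_comp_eq (extL K P) (extL_injective P) (fun i => A i), hext]
  have hle : I.mrk K P ≤ A.rank := Nat.sInf_le ⟨A, hC, rfl⟩
  omega

lemma mrk_nonempty (I : TGICP m n) (P : Set (Fin m)) :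
    {r | ∃ A : Matrix {i : Fin n // I.f i ∈ P} ↥P K,
      Completes (fun i : {i : Fin n // I.f i ∈ P} => (⟨I.f i.1, i.2⟩ : ↥P))
        (fun i => {j : ↥P | j.1 ∈ I.χ i.1}) A ∧ A.rank = r}.Nonempty := by
  classical
  refine ⟨_, Matrix.of (fun i j => if j = (⟨I.f i.1, i.2⟩ : ↥P) then (1:K) else 0), ?_, rfl⟩
  exact ⟨fun i => if_pos rfl, fun i j hj _ => if_neg hj⟩

lemma mrk_exists (I : TGICP m n) (P : Set (Fin m)) :
    ∃ A : Matrix {i : Fin n // I.f i ∈ P} ↥P K,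
      Completes (fun i : {i : Fin n // I.f i ∈ P} => (⟨I.f i.1, i.2⟩ : ↥P))
        (fun i => {j : ↥P | j.1 ∈ I.χ i.1}) A ∧
      finrank K (span K (Set.range A)) = I.mrk K P := by
  obtain ⟨A, hC, hr⟩ := Nat.sInf_mem (I.mrk_nonempty (K := K) P)
  exact ⟨A, hC, by rw [← rank_eq_finrank_span_rows]; exact hr⟩

end TGICP

namespace TGICP
variable {K : Type*} [Field K] {m n : ℕ}

lemma code_decomp (I : TGICP m n) {l1 l2 : ℕ}
    (G1 : Matrix (Fin l1) ↥I.M1 K) (G2 : Matrix (Fin l2) ↥I.M2 K)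
    (hcode : I.IsCode K G1 G2) (i : Fin n) :
    ∃ v1 ∈ span K (Set.range (fun k => extL K I.M1 (G1 k))),
    ∃ v2 ∈ span K (Set.range (fun k => extL K I.M2 (G2 k))),
    ∃ s : Fin m → K, (∀ j ∉ I.χ i, s j = 0) ∧
      (Pi.single (I.f i) 1 : Fin m → K) = v1 + v2 + s := by
  classical
  set V1 := span K (Set.range (fun k => extL K I.M1 (G1 k))) with hV1
  set V2 := span K (Set.range (fun k => extL K I.M2 (G2 k))) with hV2
  set T := V1 ⊔ V2 ⊔ suppSub K (I.χ i) with hT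
  have hmem : (Pi.single (I.f i) 1 : Fin m → K) ∈ T := by
    by_contra h
    obtain ⟨w, hw0, hw1⟩ := exists_ortho_of_not_mem h
    have hwf : w (I.f i) ≠ 0 := by
      have : ∑ j, (Pi.single (I.f i) 1 : Fin m → K) j * w j = w (I.f i) := by
        simp [Pi.single_apply]
      rwa [this] at hw1
    obtain ⟨D, hD⟩ := hcode i
    have e1 : G1.mulVec (fun j : ↥I.M1 => w j.1) = 0 := by
      ext k
      have : G1.mulVec (fun j : ↥I.M1 => w j.1) k = ∑ j : ↥I.M1, G1 k j * w j.1 := by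
        simp [Matrix.mulVec, dotProduct]
      rw [this, ← sum_extL I.M1 (G1 k) w]
      exact hw0 _ (Submodule.mem_sup_left (Submodule.mem_sup_left (subset_span ⟨k, rfl⟩)))
    have e2 : G2.mulVec (fun j : ↥I.M2 => w j.1) = 0 := by
      ext k
      have : G2.mulVec (fun j : ↥I.M2 => w j.1) k = ∑ j : ↥I.M2, G2 k j * w j.1 := by
        simp [Matrix.mulVec, dotProduct]
      rw [this, ← sum_extL I.M2 (G2 k) w]
      exact hw0 _ (Submodule.mem_sup_left (Submodule.mem_sup_right (subset_span ⟨k, rfl⟩)))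
    have e3 : (fun j : ↥(I.χ i) => w j.1) = (fun _ => (0:K)) := by
      funext j
      have hsingle : (Pi.single j.1 1 : Fin m → K) ∈ T := by
        refine Submodule.mem_sup_right ?_
        rw [mem_suppSub]
        intro p hp
        have hpj : p ≠ j.1 := fun h => hp (by rw [h]; exact j.2)
        simp [Pi.single_apply, hpj]
      have := hw0 _ hsingle
      simpa [Pi.single_apply] using this
    have hx0 := hD 0
    have hxw := hD w
    rw [e1, e2, e3] at hxw
    have z1 : (fun j : ↥I.M1 => (0 : Fin m → K) j.1) = (0 : ↥I.M1 → K) := rfl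
    have z2 : (fun j : ↥I.M2 => (0 : Fin m → K) j.1) = (0 : ↥I.M2 → K) := rfl
    rw [z1, z2, Matrix.mulVec_zero, Matrix.mulVec_zero] at hx0
    have : (fun j : ↥(I.χ i) => (0 : Fin m → K) j.1) = (fun _ => (0:K)) := rfl
    rw [this] at hx0
    simp only [Pi.zero_apply] at hx0
    rw [hxw] at hx0
    exact hwf hx0
  rw [hT] at hmem
  obtain ⟨y, hy, s, hs, hys⟩ := Submodule.mem_sup.1 hmem
  obtain ⟨v1, hv1, v2, hv2, hv12⟩ := Submodule.mem_sup.1 hy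
  exact ⟨v1, hv1, v2, hv2, s, hs, by rw [← hys, ← hv12]⟩

end TGICP

namespace TGICP
variable {K : Type*} [Field K] {m n : ℕ}

lemma lower_bound (I : TGICP m n)
    (hb : (¬ ∃ i, I.f i ∈ I.M2 \ I.M1 ∧ ∃ p ∈ I.χ i, p ∈ I.M1 ∩ I.M2) ∨
      (¬ ∃ i, I.f i ∈ I.M1 ∩ I.M2 ∧ ∃ p ∈ I.χ i, p ∈ I.M2 \ I.M1))
    {l1 l2 : ℕ} (G1 : Matrix (Fin l1) ↥I.M1 K) (G2 : Matrix (Fin l2) ↥I.M2 K)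
    (hcode : I.IsCode K G1 G2) :
    I.mrk K (I.M2 \ I.M1) + max (I.mrk K (I.M1 \ I.M2)) (I.mrk K (I.M1 ∩ I.M2)) ≤ l1 + l2 := by
  classical
  choose v1 hv1 v2 hv2 s hs hsum using fun i => I.code_decomp G1 G2 hcode i
  set V1 := span K (Set.range (fun k => extL K I.M1 (G1 k))) with hV1def
  set V2 := span K (Set.range (fun k => extL K I.M2 (G2 k))) with hV2def
  have hV1supp : V1 ≤ suppSub K I.M1 := by
    rw [hV1def, span_le]
    rintro _ ⟨k, rfl⟩ j hj
    simp [extL_apply, hj]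
  have hV2supp : V2 ≤ suppSub K I.M2 := by
    rw [hV2def, span_le]
    rintro _ ⟨k, rfl⟩ j hj
    simp [extL_apply, hj]
  have hV1rank : finrank K V1 ≤ l1 := by
    simpa [Set.finrank] using finrank_range_le_card (fun k => extL K I.M1 (G1 k))
  have hV2rank : finrank K V2 ≤ l2 := by
    simpa [Set.finrank] using finrank_range_le_card (fun k => extL K I.M2 (G2 k))
  -- the key family of vectors
  set zz : Set (Fin m) → Fin n → (Fin m → K) :=
    fun P i => projL K P ((Pi.single (I.f i) 1 : Fin m → K) - s i) with hzzdef
  have hz1 : ∀ (P) (i : Fin n), I.f i ∈ P → zz P i (I.f i) = 1 := by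
    intro P i hP
    simp [hzzdef, projL_apply, hP, Pi.single_eq_same, hs i _ (I.not_mem i)]
  have hz0 : ∀ (P) (i : Fin n) (j), j ≠ I.f i → j ∉ I.χ i → zz P i j = 0 := by
    intro P i j hjf hjχ
    by_cases hP : j ∈ P
    · simp [hzzdef, projL_apply, hP, Pi.single_eq_of_ne hjf, hs i j hjχ]
    · simp [hzzdef, projL_apply, hP]
  have hzs : ∀ (P) (i : Fin n) (j), j ∉ P → zz P i j = 0 := by
    intro P i j hP
    simp [hzzdef, projL_apply, hP]
  have hzv : ∀ (P) (i : Fin n), zz P i = projL K P (v1 i + v2 i) := by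
    intro P i
    simp only [hzzdef]
    congr 1
    rw [hsum i]
    abel
  -- the L1 bound : mrk2 + mrk1 ≤ l1 + l2
  have hL1 : I.mrk K (I.M2 \ I.M1) + I.mrk K (I.M1 \ I.M2) ≤ l1 + l2 := by
    have hy1 : ∀ i : Fin n, zz (I.M1 \ I.M2) i = projL K (I.M1 \ I.M2) (v1 i) := by
      intro i
      rw [hzv, map_add]
      have : projL K (I.M1 \ I.M2) (v2 i) = 0 := by
        ext j
        by_cases hj : j ∈ I.M1 \ I.M2
        · simp [projL_apply, hj, hV2supp (hv2 i) j hj.2]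
        · simp [projL_apply, hj]
      rw [this, add_zero]
    have hy2 : ∀ i : Fin n, zz (I.M2 \ I.M1) i = projL K (I.M2 \ I.M1) (v2 i) := by
      intro i
      rw [hzv, map_add]
      have : projL K (I.M2 \ I.M1) (v1 i) = 0 := by
        ext j
        by_cases hj : j ∈ I.M2 \ I.M1
        · simp [projL_apply, hj, hV1supp (hv1 i) j hj.2]
        · simp [projL_apply, hj]
      rw [this, zero_add]
    have h1 : I.mrk K (I.M1 \ I.M2) ≤ finrank K V1 := by
      refine le_trans (I.mrk_le_finrank_span (I.M1 \ I.M2)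
        (fun i => zz (I.M1 \ I.M2) i.1)
        (fun i => hz1 _ i.1 i.2) (fun i => hz0 _ i.1) (fun i => hzs _ i.1)) ?_
      refine le_trans (Submodule.finrank_mono ?_) (le_trans
        (Submodule.finrank_map_le (projL K (I.M1 \ I.M2)) V1) le_rfl)
      rw [span_le]
      rintro _ ⟨i, rfl⟩
      exact ⟨v1 i.1, hv1 i.1, (hy1 i.1).symm⟩
    have h2 : I.mrk K (I.M2 \ I.M1) ≤ finrank K V2 := by
      refine le_trans (I.mrk_le_finrank_span (I.M2 \ I.M1)
        (fun i => zz (I.M2 \ I.M1) i.1)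
        (fun i => hz1 _ i.1 i.2) (fun i => hz0 _ i.1) (fun i => hzs _ i.1)) ?_
      refine le_trans (Submodule.finrank_mono ?_)
        (Submodule.finrank_map_le (projL K (I.M2 \ I.M1)) V2)
      rw [span_le]
      rintro _ ⟨i, rfl⟩
      exact ⟨v2 i.1, hv2 i.1, (hy2 i.1).symm⟩
    omega
  -- the key bound : mrk2 + mrk12 ≤ l1 + l2
  have hkey : I.mrk K (I.M2 \ I.M1) + I.mrk K (I.M1 ∩ I.M2) ≤ l1 + l2 := by
    set W := (V1 ⊔ V2).map (projL K I.M2) with hWdef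
    have hzW : ∀ i : Fin n, zz I.M2 i ∈ W := by
      intro i
      exact ⟨v1 i + v2 i,
        add_mem (Submodule.mem_sup_left (hv1 i)) (Submodule.mem_sup_right (hv2 i)),
        (hzv I.M2 i).symm⟩
    have hWrank : finrank K W ≤ l1 + l2 := by
      have h1 := Submodule.finrank_sup_add_finrank_inf_eq V1 V2
      have h2 : finrank K W ≤ finrank K ↥(V1 ⊔ V2) :=
        Submodule.finrank_map_le (projL K I.M2) (V1 ⊔ V2)
      omega
    rcases hb with hb1 | hb2
    · -- no receiver with demand in P2 has side info in P12
      push_neg at hb1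
      set φ := (projL K (I.M1 ∩ I.M2)).comp W.subtype with hφdef
      have hrn := LinearMap.finrank_range_add_finrank_ker φ
      -- supp of z for receivers in P2
      have hzsupp2 : ∀ i : {i : Fin n // I.f i ∈ I.M2 \ I.M1}, ∀ j, j ∉ I.M2 \ I.M1 →
          zz I.M2 i.1 j = 0 := by
        intro i j hj
        by_cases hjM : j ∈ I.M2
        · have hjM1 : j ∈ I.M1 := by
            by_contra h
            exact hj ⟨hjM, h⟩
          have hjf : j ≠ I.f i.1 := fun h => (i.2).2 (h ▸ hjM1)
          have hjχ : j ∉ I.χ i.1 := fun hc => hb1 i.1 i.2 j hc ⟨hjM1, hjM⟩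
          exact hz0 _ i.1 j hjf hjχ
        · exact hzs _ i.1 j hjM
      have h12 : I.mrk K (I.M1 ∩ I.M2) ≤ finrank K (LinearMap.range φ) := by
        refine le_trans (I.mrk_le_finrank_span (I.M1 ∩ I.M2)
          (fun i => projL K (I.M1 ∩ I.M2) (zz I.M2 i.1)) ?_ ?_ ?_)
          (Submodule.finrank_mono ?_)
        · intro i
          simp only [projL_apply, if_pos i.2]
          exact hz1 _ i.1 i.2.2
        · intro i j hjf hjχ
          by_cases hP : j ∈ I.M1 ∩ I.M2
          · simp only [projL_apply, if_pos hP]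
            exact hz0 _ i.1 j hjf hjχ
          · simp [projL_apply, hP]
        · intro i j hP
          simp [projL_apply, hP]
        · rw [span_le]
          rintro _ ⟨i, rfl⟩
          exact ⟨⟨zz I.M2 i.1, hzW i.1⟩, rfl⟩
      have h2 : I.mrk K (I.M2 \ I.M1) ≤ finrank K (LinearMap.ker φ) := by
        refine le_trans (I.mrk_le_finrank_span (I.M2 \ I.M1)
          (fun i => zz I.M2 i.1)
          (fun i => hz1 _ i.1 i.2.1) (fun i => hz0 _ i.1) hzsupp2) ?_
        have hle : span K (Set.range (fun i : {i : Fin n // I.f i ∈ I.M2 \ I.M1} =>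
            zz I.M2 i.1)) ≤ (LinearMap.ker φ).map W.subtype := by
          rw [span_le]
          rintro _ ⟨i, rfl⟩
          refine ⟨⟨zz I.M2 i.1, hzW i.1⟩, ?_, rfl⟩
          simp only [SetLike.mem_coe, LinearMap.mem_ker]
          ext j
          by_cases hj : j ∈ I.M1 ∩ I.M2
          · have : j ∉ I.M2 \ I.M1 := fun hc => hc.2 hj.1
            simp [hφdef, projL_apply, hj, hzsupp2 i j this]
          · simp [hφdef, projL_apply, hj]
        refine le_trans (Submodule.finrank_mono hle) ?_
        rw [Submodule.finrank_map_subtype_eq]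
      omega
    · -- no receiver with demand in P12 has side info in P2
      push_neg at hb2
      set φ := (projL K (I.M2 \ I.M1)).comp W.subtype with hφdef
      have hrn := LinearMap.finrank_range_add_finrank_ker φ
      have hzsupp12 : ∀ i : {i : Fin n // I.f i ∈ I.M1 ∩ I.M2}, ∀ j, j ∉ I.M1 ∩ I.M2 →
          zz I.M2 i.1 j = 0 := by
        intro i j hj
        by_cases hjM : j ∈ I.M2
        · have hjM1 : j ∉ I.M1 := fun h => hj ⟨h, hjM⟩
          have hjf : j ≠ I.f i.1 := fun h => hjM1 (h ▸ (i.2).1)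
          have hjχ : j ∉ I.χ i.1 := fun hc => hb2 i.1 i.2 j hc ⟨hjM, hjM1⟩
          exact hz0 _ i.1 j hjf hjχ
        · exact hzs _ i.1 j hjM
      have h2 : I.mrk K (I.M2 \ I.M1) ≤ finrank K (LinearMap.range φ) := by
        refine le_trans (I.mrk_le_finrank_span (I.M2 \ I.M1)
          (fun i => projL K (I.M2 \ I.M1) (zz I.M2 i.1)) ?_ ?_ ?_)
          (Submodule.finrank_mono ?_)
        · intro i
          simp only [projL_apply, if_pos i.2]
          exact hz1 _ i.1 i.2.1
        · intro i j hjf hjχ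
          by_cases hP : j ∈ I.M2 \ I.M1
          · simp only [projL_apply, if_pos hP]
            exact hz0 _ i.1 j hjf hjχ
          · simp [projL_apply, hP]
        · intro i j hP
          simp [projL_apply, hP]
        · rw [span_le]
          rintro _ ⟨i, rfl⟩
          exact ⟨⟨zz I.M2 i.1, hzW i.1⟩, rfl⟩
      have h12 : I.mrk K (I.M1 ∩ I.M2) ≤ finrank K (LinearMap.ker φ) := by
        refine le_trans (I.mrk_le_finrank_span (I.M1 ∩ I.M2)
          (fun i => zz I.M2 i.1)
          (fun i => hz1 _ i.1 i.2.2) (fun i => hz0 _ i.1) hzsupp12) ?_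
        have hle : span K (Set.range (fun i : {i : Fin n // I.f i ∈ I.M1 ∩ I.M2} =>
            zz I.M2 i.1)) ≤ (LinearMap.ker φ).map W.subtype := by
          rw [span_le]
          rintro _ ⟨i, rfl⟩
          refine ⟨⟨zz I.M2 i.1, hzW i.1⟩, ?_, rfl⟩
          simp only [SetLike.mem_coe, LinearMap.mem_ker]
          ext j
          by_cases hj : j ∈ I.M2 \ I.M1
          · have : j ∉ I.M1 ∩ I.M2 := fun hc => hj.2 hc.1
            simp [hφdef, projL_apply, hj, hzsupp12 i j this]
          · simp [hφdef, projL_apply, hj]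
        refine le_trans (Submodule.finrank_mono hle) ?_
        rw [Submodule.finrank_map_subtype_eq]
      omega
  rcases le_total (I.mrk K (I.M1 \ I.M2)) (I.mrk K (I.M1 ∩ I.M2)) with h | h
  · rw [max_eq_right h]; exact hkey
  · rw [max_eq_left h]; exact hL1

end TGICP

namespace TGICP
variable {K : Type*} [Field K] {m n : ℕ}

lemma exists_decoder {P : Set (Fin m)} (W : Submodule K (↥P → K))
    (G : Matrix (Fin (Module.finrank K W)) ↥P K)
    (hG : ∀ k, G k = ((Module.finBasis K W) k : ↥P → K))
    (row : ↥P → K) (hrow : row ∈ W) (χi : Set (Fin m)) (fi : Fin m) (hfi : fi ∈ P)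
    (hfχ : fi ∉ χi) (h1 : row ⟨fi, hfi⟩ = 1)
    (h0 : ∀ j : ↥P, j.1 ≠ fi → j.1 ∉ χi → row j = 0) :
    ∃ D : (Fin (Module.finrank K W) → K) → (↥χi → K) → K,
      ∀ x : Fin m → K, D (G.mulVec fun j => x j.1) (fun j => x j.1) = x fi := by
  classical
  set b := Module.finBasis K W with hb
  set c := b.equivFun ⟨row, hrow⟩ with hc
  refine ⟨fun y t => (∑ k, c k * y k) -
    ∑ j : ↥P, if h : j.1 ∈ χi then row j * t ⟨j.1, h⟩ else 0, ?_⟩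
  intro x
  have hmv : ∀ k, G.mulVec (fun j => x j.1) k = ∑ j : ↥P, (b k : ↥P → K) j * x j.1 := by
    intro k
    simp [Matrix.mulVec, dotProduct, hG k]
  have hcoe : ∀ j : ↥P, (∑ k, c k * (b k : ↥P → K) j) = row j := by
    intro j
    have hbsum : (∑ k, c k • b k) = (⟨row, hrow⟩ : W) := b.sum_equivFun ⟨row, hrow⟩
    calc ∑ k, c k * (b k : ↥P → K) j
        = ((∑ k, c k • b k : W) : ↥P → K) j := by
          rw [AddSubmonoidClass.coe_finset_sum]
          simp [Finset.sum_apply]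
      _ = row j := by rw [hbsum]
  have hsum : ∑ k, c k * G.mulVec (fun j => x j.1) k = ∑ j : ↥P, row j * x j.1 := by
    calc ∑ k, c k * G.mulVec (fun j => x j.1) k
        = ∑ k, ∑ j : ↥P, c k * ((b k : ↥P → K) j * x j.1) := by
          simp_rw [hmv, Finset.mul_sum]
      _ = ∑ j : ↥P, (∑ k, c k * (b k : ↥P → K) j) * x j.1 := by
          rw [Finset.sum_comm]
          simp_rw [Finset.sum_mul, mul_assoc]
      _ = ∑ j : ↥P, row j * x j.1 := by
          exact Finset.sum_congr rfl fun j _ => by rw [hcoe j]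
  show (∑ k, c k * G.mulVec (fun j => x j.1) k) -
      (∑ j : ↥P, if h : j.1 ∈ χi then row j * x j.1 else 0) = x fi
  rw [hsum, ← Finset.sum_sub_distrib]
  have key : ∀ j : ↥P,
      (row j * x j.1 - if h : j.1 ∈ χi then row j * x j.1 else 0)
        = if j = ⟨fi, hfi⟩ then x fi else 0 := by
    intro j
    by_cases hj : j = ⟨fi, hfi⟩
    · subst hj
      rw [dif_neg hfχ, if_pos rfl, h1, one_mul]
      ring
    · have hj1 : j.1 ≠ fi := fun h => hj (Subtype.ext h)
      rw [if_neg hj]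
      by_cases hχ : j.1 ∈ χi
      · rw [dif_pos hχ]; ring
      · rw [dif_neg hχ, h0 j hj1 hχ]; ring
  rw [Finset.sum_congr rfl fun j _ => key j]
  simp
end TGICP

namespace TGICP
variable {K : Type*} [Field K] {m n : ℕ}

lemma upper_bound (I : TGICP m n) :
    ∃ (l1 l2 : ℕ) (G1 : Matrix (Fin l1) ↥I.M1 K) (G2 : Matrix (Fin l2) ↥I.M2 K),
      I.IsCode K G1 G2 ∧ l1 = I.mrk K I.M1 ∧ l2 = I.mrk K (I.M2 \ I.M1) := by
  classical
  obtain ⟨A1, hA1C, hA1r⟩ := I.mrk_exists (K := K) I.M1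
  obtain ⟨A2, hA2C, hA2r⟩ := I.mrk_exists (K := K) (I.M2 \ I.M1)
  set W1 := span K (Set.range A1) with hW1def
  set W2 := span K (Set.range (fun i => extL2 K (I.M2 \ I.M1) I.M2 (A2 i))) with hW2def
  refine ⟨Module.finrank K W1, Module.finrank K W2,
    Matrix.of (fun k j => ((Module.finBasis K W1) k : ↥I.M1 → K) j),
    Matrix.of (fun k j => ((Module.finBasis K W2) k : ↥I.M2 → K) j), ?_, ?_, ?_⟩
  · intro i
    by_cases hi : I.f i ∈ I.M1
    · obtain ⟨D, hD⟩ := exists_decoder W1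
        (Matrix.of (fun k j => ((Module.finBasis K W1) k : ↥I.M1 → K) j))
        (fun k => rfl) (A1 ⟨i, hi⟩) (subset_span ⟨⟨i, hi⟩, rfl⟩) (I.χ i) (I.f i) hi
        (I.not_mem i) (hA1C.1 ⟨i, hi⟩)
        (fun j hj hχ => hA1C.2 ⟨i, hi⟩ j (fun h => hj (congrArg Subtype.val h)) hχ)
      exact ⟨fun y1 _ t => D y1 t, fun x => hD x⟩
    · have hi2 : I.f i ∈ I.M2 \ I.M1 := by
        have : I.f i ∈ I.M1 ∪ I.M2 := by rw [I.cover]; trivial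
        rcases this with h | h
        · exact absurd h hi
        · exact ⟨h, hi⟩
      have hone : extL2 K (I.M2 \ I.M1) I.M2 (A2 ⟨i, hi2⟩) ⟨I.f i, hi2.1⟩ = 1 := by
        rw [extL2_apply, dif_pos hi2]
        exact hA2C.1 ⟨i, hi2⟩
      have hzero : ∀ j : ↥I.M2, j.1 ≠ I.f i → j.1 ∉ I.χ i →
          extL2 K (I.M2 \ I.M1) I.M2 (A2 ⟨i, hi2⟩) j = 0 := by
        intro j hj hχ
        rw [extL2_apply]
        by_cases hP : j.1 ∈ I.M2 \ I.M1
        · rw [dif_pos hP]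
          exact hA2C.2 ⟨i, hi2⟩ ⟨j.1, hP⟩ (fun h => hj (congrArg Subtype.val h)) hχ
        · rw [dif_neg hP]
      obtain ⟨D, hD⟩ := exists_decoder W2
        (Matrix.of (fun k j => ((Module.finBasis K W2) k : ↥I.M2 → K) j))
        (fun k => rfl) (extL2 K (I.M2 \ I.M1) I.M2 (A2 ⟨i, hi2⟩))
        (subset_span ⟨⟨i, hi2⟩, rfl⟩) (I.χ i) (I.f i) hi2.1
        (I.not_mem i) hone hzero
      exact ⟨fun _ y2 t => D y2 t, fun x => hD x⟩
  · exact hA1r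
  · rw [hW2def, finrank_span_range_comp_eq (extL2 K (I.M2 \ I.M1) I.M2)
        (extL2_injective Set.diff_subset) (fun i => A2 i)]
    exact hA2r

end TGICP
/-- Case II-C.  Let `I` be a TGICP such that:
(a) the SGICP formed by the receivers of `I_1` and `I_{12}` together (message set
`P_1 ∪ P_{12}`) has minrank `max mrk_1 mrk_{12}`; and
(b) either no receiver with demand in `P_2` has side information in `P_{12}`, or no receiver
with demand in `P_{12}` has side information in `P_2` (at most one of the interactions
`I_2 → I_{12}`, `I_{12} → I_2` exists).
Then `l*_q(I) = mrk_2 + max mrk_1 mrk_{12}`. -/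
theorem stmt13 (K : Type*) [Field K] [Fintype K] {m n : ℕ} (I : TGICP m n)
    (ha : I.mrk K ((I.M1 \ I.M2) ∪ (I.M1 ∩ I.M2)) =
      max (I.mrk K (I.M1 \ I.M2)) (I.mrk K (I.M1 ∩ I.M2)))
    (hb : (¬ ∃ i, I.f i ∈ I.M2 \ I.M1 ∧ ∃ p ∈ I.χ i, p ∈ I.M1 ∩ I.M2) ∨
      (¬ ∃ i, I.f i ∈ I.M1 ∩ I.M2 ∧ ∃ p ∈ I.χ i, p ∈ I.M2 \ I.M1)) :
    I.optLen K =
      I.mrk K (I.M2 \ I.M1) + max (I.mrk K (I.M1 \ I.M2)) (I.mrk K (I.M1 ∩ I.M2)) := by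
  classical
  rw [Set.diff_union_inter] at ha
  obtain ⟨l1, l2, G1, G2, hcode, hl1, hl2⟩ := I.upper_bound (K := K)
  have hne : {L | ∃ (l1 l2 : ℕ) (G1 : Matrix (Fin l1) ↥I.M1 K) (G2 : Matrix (Fin l2) ↥I.M2 K),
      I.IsCode K G1 G2 ∧ L = l1 + l2}.Nonempty := ⟨l1 + l2, l1, l2, G1, G2, hcode, rfl⟩
  have hub : I.optLen K ≤ l1 + l2 := Nat.sInf_le ⟨l1, l2, G1, G2, hcode, rfl⟩
  have hmem : I.optLen K ∈ {L | ∃ (l1 l2 : ℕ) (G1 : Matrix (Fin l1) ↥I.M1 K)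
      (G2 : Matrix (Fin l2) ↥I.M2 K), I.IsCode K G1 G2 ∧ L = l1 + l2} :=
    Nat.sInf_mem hne
  obtain ⟨l1', l2', G1', G2', hcode', hL⟩ := hmem
  have hlb := I.lower_bound hb G1' G2' hcode'
  apply le_antisymm
  · rw [hl1, hl2, ha] at hub
    omega
  · rw [hL]
    exact hlb
end

section
/- Let I be a TGICP, j ∈ {1,2}, and j^c the other index; write r_A = mrk_A for A ∈ {1, 2, 12} and assume r_{12} ≥ r_j. Assume: (a) there exist completions F^{(1)} ≈ F_x^{(1)}, F^{(2)} ≈ F_x^{(2)} of ranks r_1, r_2 that realize F̃_x as a joint extension of the type of the joint-extension theorem; (b) there is a completion F^{(12)} ≈ F_x^{(12)} of rank r_{12} whose first r_{12} rows span its row space, with P^{(12)} the matrix such that the last rows of F^{(12)} equal P^{(12)} F^{(12)}_{[r_{12}]}; and (c) with F̂^{(j)} := F^{(j)}_{[r_j]} with r_{12} − r_j zero rows appended, the stacked matrix [F̂^{(j)}; P^{(12)} F̂^{(j)}] vanishes at every entry at which the corresponding receiver with demand in P_{12} does not have the corresponding P_j-message in its side information. Then l*_q(I) ≤ r_{12}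 + max{r_{j^c}, r_{12}}. -/
open scoped Classical

/-- `F̂`: the matrix formed by the first `min r r'` rows of `F` (an `n' × m'` matrix of
rank `r' ≤ n'`), padded with zero rows at the bottom so as to have exactly `r` rows.
When `r' ≥ r` this is `F_{[r]}`; otherwise it is `F_{[r']}` with `r - r'` zero rows appended. -/
def padFirst {K : Type*} [Zero K] {n' m' : ℕ} (r r' : ℕ) (h : r' ≤ n')
    (F : Matrix (Fin n') (Fin m') K) : Matrix (Fin r) (Fin m') K :=
  Matrix.of fun a c => if hh : (a : ℕ) < r' then F ⟨a, lt_of_lt_of_le hh h⟩ c else 0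

/-- The stacked matrix `[F̂ ; P·F̂]`: its first `r` rows are those of `F̂` and its remaining
rows are the corresponding rows of `P · F̂`. -/
noncomputable def stacked {K : Type*} [Field K] {n r m' : ℕ}
    (Pm : Matrix (Fin n) (Fin r) K) (Fh : Matrix (Fin r) (Fin m') K) :
    Matrix (Fin n) (Fin m') K :=
  Matrix.of fun k c => if h : (k : ℕ) < r then Fh ⟨k, h⟩ c else ∑ t, Pm k t * Fh t c

/-- `F ≈ F_x^(A)`: the matrix `F`, with rows and columns enumerated via the bijections
`eR` (receivers demanding a message in `P`) and `eM` (messages in `P`), completes the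
fitting matrix of the sub-problem of `I` with message set `P`. -/
def SubCompletes {K : Type*} [Field K] {m n nA mA : ℕ} (I : TGICP m n) (P : Set (Fin m))
    (eR : Fin nA ≃ {i : Fin n // I.f i ∈ P}) (eM : Fin mA ≃ ↥P)
    (F : Matrix (Fin nA) (Fin mA) K) : Prop :=
  ∀ k c,
    ((eM c).1 = I.f (eR k).1 → F k c = 1) ∧
    ((eM c).1 ≠ I.f (eR k).1 → (eM c).1 ∉ I.χ (eR k).1 → F k c = 0)

noncomputable def unionEquiv {α : Type*} {s t u : Set α} (hst : Disjoint s t) (h : s ∪ t = u) :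
    ↥s ⊕ ↥t ≃ ↥u where
  toFun := Sum.elim (fun p => ⟨p.1, by rw [← h]; exact Set.mem_union_left _ p.2⟩)
    (fun p => ⟨p.1, by rw [← h]; exact Set.mem_union_right _ p.2⟩)
  invFun d := if hd : d.1 ∈ s then Sum.inl ⟨d.1, hd⟩ else
    Sum.inr ⟨d.1, by
      have hm : d.1 ∈ s ∪ t := by rw [h]; exact d.2
      exact hm.resolve_left hd⟩
  left_inv := by
    rintro (p | p)
    · simp [p.2]
    · have hp : p.1 ∉ s := fun hp => Set.disjoint_left.mp hst hp p.2
      simp [hp]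
  right_inv d := by
    by_cases hd : d.1 ∈ s <;> simp [hd]

@[simp] lemma unionEquiv_inl_coe {α : Type*} {s t u : Set α} (hst : Disjoint s t)
    (h : s ∪ t = u) (p : ↥s) : ((unionEquiv hst h (Sum.inl p) : ↥u) : α) = p := rfl

@[simp] lemma unionEquiv_inr_coe {α : Type*} {s t u : Set α} (hst : Disjoint s t)
    (h : s ∪ t = u) (p : ↥t) : ((unionEquiv hst h (Sum.inr p) : ↥u) : α) = p := rfl

lemma stack_decode {K : Type*} [Field K] {nA r mA mB : ℕ} (h : r ≤ nA)
    (FA : Matrix (Fin nA) (Fin mA) K) (Pm : Matrix (Fin nA) (Fin r) K)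
    (hP : ∀ k : Fin nA, r ≤ (k : ℕ) → ∀ c, FA k c = ∑ t, Pm k t * FA (Fin.castLE h t) c)
    (G : Matrix (Fin r) (Fin mB) K) (u : Fin mA → K) (v : Fin mB → K)
    (w : Fin r → K)
    (hw : ∀ t, w t = (∑ c, FA (Fin.castLE h t) c * u c) + ∑ c, G t c * v c)
    (k : Fin nA) :
    (if hk : (k : ℕ) < r then w ⟨k, hk⟩ else ∑ t, Pm k t * w t)
      = (∑ c, FA k c * u c) + ∑ c, stacked Pm G k c * v c := by
  by_cases hk : (k : ℕ) < r
  · rw [dif_pos hk, hw]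
    have h1 : Fin.castLE h (⟨(k : ℕ), hk⟩ : Fin r) = k := by ext; simp
    rw [h1]
    congr 1
    apply Finset.sum_congr rfl
    intro c _
    simp [stacked, hk]
  · rw [dif_neg hk]
    have hrk : r ≤ (k : ℕ) := le_of_not_gt hk
    calc ∑ t, Pm k t * w t
        = ∑ t, ((∑ c, Pm k t * (FA (Fin.castLE h t) c * u c))
            + ∑ c, Pm k t * (G t c * v c)) := by
          apply Finset.sum_congr rfl; intro t _
          rw [hw, mul_add, Finset.mul_sum, Finset.mul_sum]
      _ = (∑ t, ∑ c, Pm k t * (FA (Fin.castLE h t) c * u c))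
            + ∑ t, ∑ c, Pm k t * (G t c * v c) := Finset.sum_add_distrib
      _ = (∑ c, ∑ t, Pm k t * (FA (Fin.castLE h t) c * u c))
            + ∑ c, ∑ t, Pm k t * (G t c * v c) := by rw [Finset.sum_comm]; congr 1; rw [Finset.sum_comm]
      _ = (∑ c, FA k c * u c) + ∑ c, stacked Pm G k c * v c := by
          congr 1
          · apply Finset.sum_congr rfl; intro c _
            rw [hP k hrk c, Finset.sum_mul]
            apply Finset.sum_congr rfl; intro t _; ring
          · apply Finset.sum_congr rfl; intro c _
            rw [stacked]
            simp only [Matrix.of_apply, dif_neg hk]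
            rw [Finset.sum_mul]
            apply Finset.sum_congr rfl; intro t _; ring

lemma decode_corr {K : Type*} [Field K] {m mA mB : ℕ} (χi : Set (Fin m)) (fi : Fin m)
    (hfi : fi ∉ χi) {PA PB : Set (Fin m)}
    (eA : Fin mA ≃ ↥PA) (eB : Fin mB ≃ ↥PB)
    (hfiA : fi ∈ PA)
    (gA : Fin mA → K) (gB : Fin mB → K)
    (hdem : gA (eA.symm ⟨fi, hfiA⟩) = 1)
    (hA0 : ∀ c, ((eA c : ↥PA) : Fin m) ≠ fi → ((eA c : ↥PA) : Fin m) ∉ χi → gA c = 0)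
    (hB0 : ∀ c, ((eB c : ↥PB) : Fin m) ∉ χi → gB c = 0)
    (x : Fin m → K) :
    ((∑ c, gA c * x (eA c)) + ∑ c, gB c * x (eB c))
      - ((∑ c, if h : ((eA c : ↥PA) : Fin m) ∈ χi then gA c * x (eA c) else 0)
        + (∑ c, if h : ((eB c : ↥PB) : Fin m) ∈ χi then gB c * x (eB c) else 0)) = x fi := by
  rw [add_sub_add_comm, ← Finset.sum_sub_distrib, ← Finset.sum_sub_distrib]
  have hB : ∀ c : Fin mB,
      gB c * x (eB c) - (if h : ((eB c : ↥PB) : Fin m) ∈ χi then gB c * x (eB c) else 0) = 0 := by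
    intro c
    by_cases h : ((eB c : ↥PB) : Fin m) ∈ χi
    · rw [dif_pos h, sub_self]
    · rw [dif_neg h, hB0 c h, zero_mul, sub_zero]
  have hA : ∀ c : Fin mA,
      gA c * x (eA c) - (if h : ((eA c : ↥PA) : Fin m) ∈ χi then gA c * x (eA c) else 0)
        = if c = eA.symm ⟨fi, hfiA⟩ then x fi else 0 := by
    intro c
    by_cases hc : c = eA.symm ⟨fi, hfiA⟩
    · subst hc
      have he : ((eA (eA.symm ⟨fi, hfiA⟩) : ↥PA) : Fin m) = fi := by simp
      rw [if_pos rfl, dif_neg (by rw [he]; exact hfi), hdem, one_mul, sub_zero, he]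
    · rw [if_neg hc]
      by_cases h : ((eA c : ↥PA) : Fin m) ∈ χi
      · rw [dif_pos h, sub_self]
      · have hne : ((eA c : ↥PA) : Fin m) ≠ fi := by
          intro he
          have : eA c = ⟨fi, hfiA⟩ := Subtype.ext he
          exact hc (by rw [← this, Equiv.symm_apply_apply])
        rw [dif_neg h, hA0 c hne h, zero_mul, sub_zero]
  rw [Finset.sum_congr rfl fun c _ => hA c, Finset.sum_congr rfl fun c _ => hB c]
  simp

theorem tgicp_core {K : Type*} [Field K] {m n : ℕ} (I : TGICP m n)
    (Pj Pjc : Set (Fin m))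
    (rj rjc r12 : ℕ) (hord : rj ≤ r12)
    {nj mj njc mjc n12 m12 : ℕ}
    (eRj : Fin nj ≃ {i : Fin n // I.f i ∈ Pj}) (eMj : Fin mj ≃ ↥Pj)
    (eRjc : Fin njc ≃ {i : Fin n // I.f i ∈ Pjc}) (eMjc : Fin mjc ≃ ↥Pjc)
    (eR12 : Fin n12 ≃ {i : Fin n // I.f i ∈ I.M1 ∩ I.M2})
    (eM12 : Fin m12 ≃ ↥(I.M1 ∩ I.M2))
    (Fj : Matrix (Fin nj) (Fin mj) K) (Fjc : Matrix (Fin njc) (Fin mjc) K)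
    (F12 : Matrix (Fin n12) (Fin m12) K)
    (hFj : SubCompletes I Pj eRj eMj Fj) (hFjc : SubCompletes I Pjc eRjc eMjc Fjc)
    (hF12 : SubCompletes I (I.M1 ∩ I.M2) eR12 eM12 F12)
    (hnj : rj ≤ nj) (hnjc : rjc ≤ njc) (hn12 : r12 ≤ n12)
    (Pjm : Matrix (Fin nj) (Fin rj) K) (Pjcm : Matrix (Fin njc) (Fin rjc) K)
    (P12m : Matrix (Fin n12) (Fin r12) K)
    (hPj : ∀ k : Fin nj, rj ≤ (k : ℕ) →
      ∀ c, Fj k c = ∑ t, Pjm k t * Fj (Fin.castLE hnj t) c)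
    (hPjc : ∀ k : Fin njc, rjc ≤ (k : ℕ) →
      ∀ c, Fjc k c = ∑ t, Pjcm k t * Fjc (Fin.castLE hnjc t) c)
    (hP12 : ∀ k : Fin n12, r12 ≤ (k : ℕ) →
      ∀ c, F12 k c = ∑ t, P12m k t * F12 (Fin.castLE hn12 t) c)
    (hJE1 : ∀ (k : Fin nj) (c : Fin mjc), (eMjc c).1 ∉ I.χ (eRj k).1 →
      stacked Pjm (padFirst rj rjc hnjc Fjc) k c = 0)
    (hJE2 : ∀ (k : Fin njc) (c : Fin mj), (eMj c).1 ∉ I.χ (eRjc k).1 →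
      stacked Pjcm (padFirst rjc rj hnj Fj) k c = 0)
    (hc : ∀ (k : Fin n12) (c : Fin mj), (eMj c).1 ∉ I.χ (eR12 k).1 →
      stacked P12m (padFirst r12 rj hnj Fj) k c = 0)
    (MA MB : Set (Fin m)) (hMA : Pj ∪ (I.M1 ∩ I.M2) = MA) (hMB : Pjc ∪ (I.M1 ∩ I.M2) = MB)
    (hdA : Disjoint Pj (I.M1 ∩ I.M2)) (hdB : Disjoint Pjc (I.M1 ∩ I.M2))
    (hdjjc : Disjoint Pj Pjc)
    (hcov : ∀ i : Fin n, I.f i ∈ Pj ∨ I.f i ∈ Pjc ∨ I.f i ∈ I.M1 ∩ I.M2) :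
    ∃ (GA : Matrix (Fin r12) ↥MA K) (GB : Matrix (Fin (max rjc r12)) ↥MB K),
      ∀ i : Fin n, ∃ D : (Fin r12 → K) → (Fin (max rjc r12) → K) → (↥(I.χ i) → K) → K,
        ∀ x : Fin m → K,
          D (GA.mulVec fun j => x j.1) (GB.mulVec fun j => x j.1) (fun j => x j.1)
            = x (I.f i) := by
  have hrjcs : rjc ≤ max rjc r12 := le_max_left _ _
  have hr12s : r12 ≤ max rjc r12 := le_max_right _ _
  have hrjs : rj ≤ max rjc r12 := hord.trans hr12s
  set Aj : Matrix (Fin r12) (Fin mj) K := padFirst r12 rj hnj Fj with hAj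
  set A12 : Matrix (Fin r12) (Fin m12) K :=
    Matrix.of (fun t c => F12 (Fin.castLE hn12 t) c) with hA12
  set Bjc : Matrix (Fin (max rjc r12)) (Fin mjc) K := padFirst (max rjc r12) rjc hnjc Fjc
    with hBjc
  set B12 : Matrix (Fin (max rjc r12)) (Fin m12) K := Matrix.of (fun t c =>
    if h : (t : ℕ) < r12 then -F12 (Fin.castLE hn12 ⟨t, h⟩) c else 0) with hB12
  set uA : ↥Pj ⊕ ↥(I.M1 ∩ I.M2) ≃ ↥MA := unionEquiv hdA hMA with huA
  set uB : ↥Pjc ⊕ ↥(I.M1 ∩ I.M2) ≃ ↥MB := unionEquiv hdB hMB with huB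
  set GA : Matrix (Fin r12) ↥MA K := Matrix.of (fun t d =>
    Sum.elim (fun p => Aj t (eMj.symm p)) (fun p => A12 t (eM12.symm p)) (uA.symm d))
    with hGA
  set GB : Matrix (Fin (max rjc r12)) ↥MB K := Matrix.of (fun t d =>
    Sum.elim (fun p => Bjc t (eMjc.symm p)) (fun p => B12 t (eM12.symm p)) (uB.symm d))
    with hGB
  have hyA : ∀ (x : Fin m → K) (t : Fin r12),
      (GA.mulVec fun j : ↥MA => x j.1) t
        = (∑ c, Aj t c * x (eMj c).1) + ∑ c, A12 t c * x (eM12 c).1 := by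
    intro x t
    have hsum := Equiv.sum_comp ((eMj.sumCongr eM12).trans uA)
      (fun d : ↥MA => GA t d * x d.1)
    rw [Matrix.mulVec, dotProduct, ← hsum, Fintype.sum_sum_type]
    congr 1
    · apply Finset.sum_congr rfl; intro c _
      simp [hGA, huA]
    · apply Finset.sum_congr rfl; intro c _
      simp [hGA, huA]
  have hyB : ∀ (x : Fin m → K) (t : Fin (max rjc r12)),
      (GB.mulVec fun j : ↥MB => x j.1) t
        = (∑ c, Bjc t c * x (eMjc c).1) + ∑ c, B12 t c * x (eM12 c).1 := by
    intro x t
    have hsum := Equiv.sum_comp ((eMjc.sumCongr eM12).trans uB)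
      (fun d : ↥MB => GB t d * x d.1)
    rw [Matrix.mulVec, dotProduct, ← hsum, Fintype.sum_sum_type]
    congr 1
    · apply Finset.sum_congr rfl; intro c _
      simp [hGB, huB]
    · apply Finset.sum_congr rfl; intro c _
      simp [hGB, huB]
  refine ⟨GA, GB, ?_⟩
  intro i
  rcases hcov i with hfi | hfi | hfi
  -- Case 1 : demand in Pj
  · refine ⟨fun yA yB si =>
      (if hkr : ((eRj.symm ⟨i, hfi⟩ : Fin nj) : ℕ) < rj
        then yA (Fin.castLE hord ⟨((eRj.symm ⟨i, hfi⟩ : Fin nj) : ℕ), hkr⟩)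
          + yB (Fin.castLE hrjs ⟨((eRj.symm ⟨i, hfi⟩ : Fin nj) : ℕ), hkr⟩)
        else ∑ t, Pjm (eRj.symm ⟨i, hfi⟩) t * (yA (Fin.castLE hord t) + yB (Fin.castLE hrjs t)))
      - ((∑ c, if h : ((eMj c : ↥Pj) : Fin m) ∈ I.χ i
            then Fj (eRj.symm ⟨i, hfi⟩) c * si ⟨(eMj c : ↥Pj), h⟩ else 0)
        + ∑ c, if h : ((eMjc c : ↥Pjc) : Fin m) ∈ I.χ i
            then stacked Pjm (padFirst rj rjc hnjc Fjc) (eRj.symm ⟨i, hfi⟩) c * si ⟨(eMjc c : ↥Pjc), h⟩ else 0), ?_⟩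
    intro x
    set k : Fin nj := eRj.symm ⟨i, hfi⟩ with hk
    have hki : ((eRj k : {i : Fin n // I.f i ∈ Pj}) : Fin n) = i := by
      rw [hk, Equiv.apply_symm_apply]
    have hw : ∀ t : Fin rj,
        (GA.mulVec fun j : ↥MA => x j.1) (Fin.castLE hord t)
          + (GB.mulVec fun j : ↥MB => x j.1) (Fin.castLE hrjs t)
          = (∑ c, Fj (Fin.castLE hnj t) c * x (eMj c).1)
            + ∑ c, padFirst rj rjc hnjc Fjc t c * x (eMjc c).1 := by
      intro t
      rw [hyA, hyB]
      have e1 : ∀ c, Aj (Fin.castLE hord t) c = Fj (Fin.castLE hnj t) c := by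
        intro c
        simp only [hAj, padFirst, Matrix.of_apply]
        rw [dif_pos (show ((Fin.castLE hord t : Fin r12) : ℕ) < rj from t.isLt)]
        exact congrFun (congrArg Fj (by ext; simp)) c
      have e2 : ∀ c, Bjc (Fin.castLE hrjs t) c = padFirst rj rjc hnjc Fjc t c := by
        intro c
        simp only [hBjc, padFirst, Matrix.of_apply]
        by_cases hh : (t : ℕ) < rjc
        · rw [dif_pos (show ((Fin.castLE hrjs t : Fin (max rjc r12)) : ℕ) < rjc from hh),
            dif_pos hh]
          exact congrFun (congrArg Fjc (by ext; simp)) c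
        · rw [dif_neg (show ¬ ((Fin.castLE hrjs t : Fin (max rjc r12)) : ℕ) < rjc from hh),
            dif_neg hh]
      have e3 : ∀ c, A12 (Fin.castLE hord t) c + B12 (Fin.castLE hrjs t) c = 0 := by
        intro c
        simp only [hA12, hB12, Matrix.of_apply]
        rw [dif_pos (show ((Fin.castLE hrjs t : Fin (max rjc r12)) : ℕ) < r12
          from lt_of_lt_of_le t.isLt hord)]
        rw [show (Fin.castLE hn12 (Fin.castLE hord t) : Fin n12)
            = Fin.castLE hn12 ⟨((Fin.castLE hrjs t : Fin (max rjc r12)) : ℕ),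
                lt_of_lt_of_le t.isLt hord⟩ from by ext; simp]
        ring
      have s1 : ∑ c, Aj (Fin.castLE hord t) c * x (eMj c).1
          = ∑ c, Fj (Fin.castLE hnj t) c * x (eMj c).1 :=
        Finset.sum_congr rfl fun c _ => by rw [e1 c]
      have s2 : ∑ c, Bjc (Fin.castLE hrjs t) c * x (eMjc c).1
          = ∑ c, padFirst rj rjc hnjc Fjc t c * x (eMjc c).1 :=
        Finset.sum_congr rfl fun c _ => by rw [e2 c]
      have s3 : (∑ c, A12 (Fin.castLE hord t) c * x (eM12 c).1)
          + (∑ c, B12 (Fin.castLE hrjs t) c * x (eM12 c).1) = 0 := by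
        rw [← Finset.sum_add_distrib]
        exact Finset.sum_eq_zero fun c _ => by rw [← add_mul, e3 c, zero_mul]
      rw [s1, s2]
      linear_combination s3
    have hz : (if hkr : (k : ℕ) < rj
          then (GA.mulVec fun j : ↥MA => x j.1) (Fin.castLE hord ⟨(k : ℕ), hkr⟩)
            + (GB.mulVec fun j : ↥MB => x j.1) (Fin.castLE hrjs ⟨(k : ℕ), hkr⟩)
          else ∑ t, Pjm k t * ((GA.mulVec fun j : ↥MA => x j.1) (Fin.castLE hord t)
            + (GB.mulVec fun j : ↥MB => x j.1) (Fin.castLE hrjs t)))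
        = (∑ c, Fj k c * x (eMj c).1)
          + ∑ c, stacked Pjm (padFirst rj rjc hnjc Fjc) k c * x (eMjc c).1 :=
      stack_decode hnj Fj Pjm hPj (padFirst rj rjc hnjc Fjc) (fun c => x (eMj c).1)
        (fun c => x (eMjc c).1)
        (fun t => (GA.mulVec fun j : ↥MA => x j.1) (Fin.castLE hord t)
          + (GB.mulVec fun j : ↥MB => x j.1) (Fin.castLE hrjs t)) hw k
    exact (congrArg₂ (· - ·) hz rfl).trans
      (decode_corr (I.χ i) (I.f i) (I.not_mem i) eMj eMjc hfi
        (Fj k) (fun c => stacked Pjm (padFirst rj rjc hnjc Fjc) k c)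
        ((hFj k _).1 (by rw [hki]; simp))
        (fun c h1 h2 => (hFj k c).2 (by rw [hki]; exact h1) (by rw [hki]; exact h2))
        (fun c h => hJE1 k c (by rw [hki]; exact h)) x)
  -- Case 2 : demand in Pjc
  · refine ⟨fun yA yB si =>
      (if hkr : ((eRjc.symm ⟨i, hfi⟩ : Fin njc) : ℕ) < rjc
        then (if h : ((⟨((eRjc.symm ⟨i, hfi⟩ : Fin njc) : ℕ), hkr⟩ : Fin rjc) : ℕ) < r12
                then yA ⟨((⟨((eRjc.symm ⟨i, hfi⟩ : Fin njc) : ℕ), hkr⟩ : Fin rjc) : ℕ), h⟩ else 0)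
          + yB (Fin.castLE hrjcs ⟨((eRjc.symm ⟨i, hfi⟩ : Fin njc) : ℕ), hkr⟩)
        else ∑ t, Pjcm (eRjc.symm ⟨i, hfi⟩) t *
          ((if h : (t : ℕ) < r12 then yA ⟨(t : ℕ), h⟩ else 0) + yB (Fin.castLE hrjcs t)))
      - ((∑ c, if h : ((eMjc c : ↥Pjc) : Fin m) ∈ I.χ i
            then Fjc (eRjc.symm ⟨i, hfi⟩) c * si ⟨(eMjc c : ↥Pjc), h⟩ else 0)
        + ∑ c, if h : ((eMj c : ↥Pj) : Fin m) ∈ I.χ i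
            then stacked Pjcm (padFirst rjc rj hnj Fj) (eRjc.symm ⟨i, hfi⟩) c * si ⟨(eMj c : ↥Pj), h⟩ else 0), ?_⟩
    intro x
    set k : Fin njc := eRjc.symm ⟨i, hfi⟩ with hk
    have hki : ((eRjc k : {i : Fin n // I.f i ∈ Pjc}) : Fin n) = i := by
      rw [hk, Equiv.apply_symm_apply]
    have hw : ∀ t : Fin rjc,
        (if h : (t : ℕ) < r12 then (GA.mulVec fun j : ↥MA => x j.1) ⟨(t : ℕ), h⟩ else 0)
          + (GB.mulVec fun j : ↥MB => x j.1) (Fin.castLE hrjcs t)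
          = (∑ c, Fjc (Fin.castLE hnjc t) c * x (eMjc c).1)
            + ∑ c, padFirst rjc rj hnj Fj t c * x (eMj c).1 := by
      intro t
      rw [hyB]
      have e2 : ∀ c, Bjc (Fin.castLE hrjcs t) c = Fjc (Fin.castLE hnjc t) c := by
        intro c
        simp only [hBjc, padFirst, Matrix.of_apply]
        rw [dif_pos (show ((Fin.castLE hrjcs t : Fin (max rjc r12)) : ℕ) < rjc from t.isLt)]
        exact congrFun (congrArg Fjc (by ext; simp)) c
      have s2 : ∑ c, Bjc (Fin.castLE hrjcs t) c * x (eMjc c).1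
          = ∑ c, Fjc (Fin.castLE hnjc t) c * x (eMjc c).1 :=
        Finset.sum_congr rfl fun c _ => by rw [e2 c]
      by_cases h : (t : ℕ) < r12
      · rw [dif_pos h, hyA]
        have e1 : ∀ c, Aj (⟨(t : ℕ), h⟩ : Fin r12) c = padFirst rjc rj hnj Fj t c := by
          intro c
          simp only [hAj, padFirst, Matrix.of_apply]
        have e3 : ∀ c, A12 (⟨(t : ℕ), h⟩ : Fin r12) c + B12 (Fin.castLE hrjcs t) c = 0 := by
          intro c
          simp only [hA12, hB12, Matrix.of_apply]
          rw [dif_pos (show ((Fin.castLE hrjcs t : Fin (max rjc r12)) : ℕ) < r12 from h)]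
          rw [show (Fin.castLE hn12 (⟨(t : ℕ), h⟩ : Fin r12) : Fin n12)
              = Fin.castLE hn12 ⟨((Fin.castLE hrjcs t : Fin (max rjc r12)) : ℕ), h⟩
              from by ext; simp]
          ring
        have s1 : ∑ c, Aj (⟨(t : ℕ), h⟩ : Fin r12) c * x (eMj c).1
            = ∑ c, padFirst rjc rj hnj Fj t c * x (eMj c).1 :=
          Finset.sum_congr rfl fun c _ => by rw [e1 c]
        have s3 : (∑ c, A12 (⟨(t : ℕ), h⟩ : Fin r12) c * x (eM12 c).1)
            + (∑ c, B12 (Fin.castLE hrjcs t) c * x (eM12 c).1) = 0 := by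
          rw [← Finset.sum_add_distrib]
          exact Finset.sum_eq_zero fun c _ => by rw [← add_mul, e3 c, zero_mul]
        rw [s1, s2]
        linear_combination s3
      · rw [dif_neg h, zero_add]
        have s1 : ∑ c, padFirst rjc rj hnj Fj t c * x (eMj c).1 = 0 :=
          Finset.sum_eq_zero fun c _ => by
            simp only [padFirst, Matrix.of_apply]
            rw [dif_neg (fun hh => h (lt_of_lt_of_le hh hord)), zero_mul]
        have s3 : ∑ c, B12 (Fin.castLE hrjcs t) c * x (eM12 c).1 = 0 :=
          Finset.sum_eq_zero fun c _ => by
            simp only [hB12, Matrix.of_apply]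
            rw [dif_neg (show ¬ ((Fin.castLE hrjcs t : Fin (max rjc r12)) : ℕ) < r12 from h),
              zero_mul]
        rw [s2]
        linear_combination s3 - s1
    have hz : (if hkr : (k : ℕ) < rjc
          then (if h : ((⟨(k : ℕ), hkr⟩ : Fin rjc) : ℕ) < r12
              then (GA.mulVec fun j : ↥MA => x j.1) ⟨((⟨(k : ℕ), hkr⟩ : Fin rjc) : ℕ), h⟩ else 0)
            + (GB.mulVec fun j : ↥MB => x j.1) (Fin.castLE hrjcs ⟨(k : ℕ), hkr⟩)
          else ∑ t, Pjcm k t * ((if h : (t : ℕ) < r12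
              then (GA.mulVec fun j : ↥MA => x j.1) ⟨(t : ℕ), h⟩ else 0)
            + (GB.mulVec fun j : ↥MB => x j.1) (Fin.castLE hrjcs t)))
        = (∑ c, Fjc k c * x (eMjc c).1)
          + ∑ c, stacked Pjcm (padFirst rjc rj hnj Fj) k c * x (eMj c).1 :=
      stack_decode hnjc Fjc Pjcm hPjc (padFirst rjc rj hnj Fj) (fun c => x (eMjc c).1)
        (fun c => x (eMj c).1)
        (fun t => (if h : (t : ℕ) < r12
            then (GA.mulVec fun j : ↥MA => x j.1) ⟨(t : ℕ), h⟩ else 0)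
          + (GB.mulVec fun j : ↥MB => x j.1) (Fin.castLE hrjcs t)) hw k
    exact (congrArg₂ (· - ·) hz rfl).trans
      (decode_corr (I.χ i) (I.f i) (I.not_mem i) eMjc eMj hfi
        (Fjc k) (fun c => stacked Pjcm (padFirst rjc rj hnj Fj) k c)
        ((hFjc k _).1 (by rw [hki]; simp))
        (fun c h1 h2 => (hFjc k c).2 (by rw [hki]; exact h1) (by rw [hki]; exact h2))
        (fun c h => hJE2 k c (by rw [hki]; exact h)) x)
  -- Case 3 : demand in P12
  · refine ⟨fun yA yB si =>
      (if hkr : ((eR12.symm ⟨i, hfi⟩ : Fin n12) : ℕ) < r12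
        then yA ⟨((eR12.symm ⟨i, hfi⟩ : Fin n12) : ℕ), hkr⟩
        else ∑ t, P12m (eR12.symm ⟨i, hfi⟩) t * yA t)
      - ((∑ c, if h : ((eM12 c : ↥(I.M1 ∩ I.M2)) : Fin m) ∈ I.χ i
            then F12 (eR12.symm ⟨i, hfi⟩) c * si ⟨(eM12 c : ↥(I.M1 ∩ I.M2)), h⟩ else 0)
        + ∑ c, if h : ((eMj c : ↥Pj) : Fin m) ∈ I.χ i
            then stacked P12m (padFirst r12 rj hnj Fj) (eR12.symm ⟨i, hfi⟩) c * si ⟨(eMj c : ↥Pj), h⟩ else 0), ?_⟩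
    intro x
    set k : Fin n12 := eR12.symm ⟨i, hfi⟩ with hk
    have hki : ((eR12 k : {i : Fin n // I.f i ∈ I.M1 ∩ I.M2}) : Fin n) = i := by
      rw [hk, Equiv.apply_symm_apply]
    have hw : ∀ t : Fin r12,
        (GA.mulVec fun j : ↥MA => x j.1) t
          = (∑ c, F12 (Fin.castLE hn12 t) c * x (eM12 c).1)
            + ∑ c, padFirst r12 rj hnj Fj t c * x (eMj c).1 := by
      intro t
      rw [hyA, add_comm]
      rfl
    have hz : (if hkr : (k : ℕ) < r12
          then (GA.mulVec fun j : ↥MA => x j.1) ⟨(k : ℕ), hkr⟩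
          else ∑ t, P12m k t * (GA.mulVec fun j : ↥MA => x j.1) t)
        = (∑ c, F12 k c * x (eM12 c).1)
          + ∑ c, stacked P12m (padFirst r12 rj hnj Fj) k c * x (eMj c).1 :=
      stack_decode hn12 F12 P12m hP12 (padFirst r12 rj hnj Fj) (fun c => x (eM12 c).1)
        (fun c => x (eMj c).1) (GA.mulVec fun j : ↥MA => x j.1) hw k
    exact (congrArg₂ (· - ·) hz rfl).trans
      (decode_corr (I.χ i) (I.f i) (I.not_mem i) eM12 eMj hfi
        (F12 k) (fun c => stacked P12m (padFirst r12 rj hnj Fj) k c)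
        ((hF12 k _).1 (by rw [hki]; simp))
        (fun c h1 h2 => (hF12 k c).2 (by rw [hki]; exact h1) (by rw [hki]; exact h2))
        (fun c h => hc k c (by rw [hki]; exact h)) x)

/-- Case II-E upper bound, Theorem 6(i).
Let `I` be a TGICP, `Pj` the message set of sub-problem `j ∈ {1,2}` and `Pjc` that of the
other index (hyp `hPchoice`); write `rj = mrk_j`, `rjc = mrk_{j^c}`, `r12 = mrk_{12}` and
assume `r12 ≥ rj`.  Assume:
(a) completions `Fj ≈ F_x^(j)`, `Fjc ≈ F_x^(j^c)` of ranks `rj, rjc` realize `F̃_x` (the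
SGICP of the receivers of `I_1` and `I_2` together) as a joint extension of the type of the
joint-extension theorem: the first `rj` (resp. `rjc`) rows span the row spaces (via `Pjm`,
`Pjcm`; hyps `hPj`, `hPjc`) and the stacked matrices `[F̂ ; P·F̂]` vanish at every
non-side-information entry of the off-diagonal blocks (hyps `hJE1`, `hJE2`);
(b) a completion `F12 ≈ F_x^(12)` of rank `r12` has its first `r12` rows spanning its row
space, with `P12m` expressing the remaining rows (hyp `hP12`);
(c) with `F̂^(j)` the first `rj` rows of `Fj` padded with `r12 − rj` zero rows, the stacked
matrix `[F̂^(j) ; P12m · F̂^(j)]` vanishes at every entry at which the corresponding receiver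
with demand in `P_{12}` does not have the corresponding `P_j`-message in its side
information (hyp `hc`).
Then `l*_q(I) ≤ r12 + max rjc r12`. -/
theorem stmt16 (K : Type*) [Field K] [Fintype K] {m n : ℕ} (I : TGICP m n)
    (Pj Pjc : Set (Fin m))
    (hPchoice : (Pj = I.M1 \ I.M2 ∧ Pjc = I.M2 \ I.M1) ∨
      (Pj = I.M2 \ I.M1 ∧ Pjc = I.M1 \ I.M2))
    (rj rjc r12 : ℕ)
    (hrj : rj = I.mrk K Pj) (hrjc : rjc = I.mrk K Pjc)
    (hr12 : r12 = I.mrk K (I.M1 ∩ I.M2))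
    (hord : rj ≤ r12)
    (nj mj njc mjc n12 m12 : ℕ)
    (eRj : Fin nj ≃ {i : Fin n // I.f i ∈ Pj}) (eMj : Fin mj ≃ ↥Pj)
    (eRjc : Fin njc ≃ {i : Fin n // I.f i ∈ Pjc}) (eMjc : Fin mjc ≃ ↥Pjc)
    (eR12 : Fin n12 ≃ {i : Fin n // I.f i ∈ I.M1 ∩ I.M2})
    (eM12 : Fin m12 ≃ ↥(I.M1 ∩ I.M2))
    (Fj : Matrix (Fin nj) (Fin mj) K) (Fjc : Matrix (Fin njc) (Fin mjc) K)
    (F12 : Matrix (Fin n12) (Fin m12) K)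
    (hFj : SubCompletes I Pj eRj eMj Fj) (hFjc : SubCompletes I Pjc eRjc eMjc Fjc)
    (hF12 : SubCompletes I (I.M1 ∩ I.M2) eR12 eM12 F12)
    (hrkj : Fj.rank = rj) (hrkjc : Fjc.rank = rjc) (hrk12 : F12.rank = r12)
    (hnj : rj ≤ nj) (hnjc : rjc ≤ njc) (hn12 : r12 ≤ n12)
    (Pjm : Matrix (Fin nj) (Fin rj) K) (Pjcm : Matrix (Fin njc) (Fin rjc) K)
    (P12m : Matrix (Fin n12) (Fin r12) K)
    (hPj : ∀ k : Fin nj, rj ≤ (k : ℕ) →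
      ∀ c, Fj k c = ∑ t, Pjm k t * Fj (Fin.castLE hnj t) c)
    (hPjc : ∀ k : Fin njc, rjc ≤ (k : ℕ) →
      ∀ c, Fjc k c = ∑ t, Pjcm k t * Fjc (Fin.castLE hnjc t) c)
    (hP12 : ∀ k : Fin n12, r12 ≤ (k : ℕ) →
      ∀ c, F12 k c = ∑ t, P12m k t * F12 (Fin.castLE hn12 t) c)
    (hJE1 : ∀ (k : Fin nj) (c : Fin mjc), (eMjc c).1 ∉ I.χ (eRj k).1 →
      stacked Pjm (padFirst rj rjc hnjc Fjc) k c = 0)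
    (hJE2 : ∀ (k : Fin njc) (c : Fin mj), (eMj c).1 ∉ I.χ (eRjc k).1 →
      stacked Pjcm (padFirst rjc rj hnj Fj) k c = 0)
    (hc : ∀ (k : Fin n12) (c : Fin mj), (eMj c).1 ∉ I.χ (eR12 k).1 →
      stacked P12m (padFirst r12 rj hnj Fj) k c = 0) :
    I.optLen K ≤ r12 + max rjc r12 := by
  have hmem : ∀ i : Fin n, I.f i ∈ I.M1 ∪ I.M2 := by
    intro i; rw [I.cover]; trivial
  rcases hPchoice with ⟨h1, h2⟩ | ⟨h1, h2⟩
  · subst h1; subst h2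
    obtain ⟨GA, GB, hdec⟩ := tgicp_core I (I.M1 \ I.M2) (I.M2 \ I.M1) rj rjc r12 hord
      eRj eMj eRjc eMjc eR12 eM12 Fj Fjc F12 hFj hFjc hF12 hnj hnjc hn12
      Pjm Pjcm P12m hPj hPjc hP12 hJE1 hJE2 hc I.M1 I.M2
      (Set.diff_union_inter I.M1 I.M2)
      (by rw [Set.inter_comm]; exact Set.diff_union_inter I.M2 I.M1)
      (Set.disjoint_left.mpr fun a ha hb => ha.2 hb.2)
      (Set.disjoint_left.mpr fun a ha hb => ha.2 hb.1)
      (Set.disjoint_left.mpr fun a ha hb => hb.2 ha.1)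
      (by
        intro i
        rcases hmem i with h | h
        · by_cases h2 : I.f i ∈ I.M2
          · exact Or.inr (Or.inr ⟨h, h2⟩)
          · exact Or.inl ⟨h, h2⟩
        · by_cases h1 : I.f i ∈ I.M1
          · exact Or.inr (Or.inr ⟨h1, h⟩)
          · exact Or.inr (Or.inl ⟨h, h1⟩))
    exact Nat.sInf_le ⟨r12, max rjc r12, GA, GB, hdec, rfl⟩
  · subst h1; subst h2
    obtain ⟨GA, GB, hdec⟩ := tgicp_core I (I.M2 \ I.M1) (I.M1 \ I.M2) rj rjc r12 hord
      eRj eMj eRjc eMjc eR12 eM12 Fj Fjc F12 hFj hFjc hF12 hnj hnjc hn12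
      Pjm Pjcm P12m hPj hPjc hP12 hJE1 hJE2 hc I.M2 I.M1
      (by rw [Set.inter_comm]; exact Set.diff_union_inter I.M2 I.M1)
      (Set.diff_union_inter I.M1 I.M2)
      (Set.disjoint_left.mpr fun a ha hb => ha.2 hb.1)
      (Set.disjoint_left.mpr fun a ha hb => ha.2 hb.2)
      (Set.disjoint_left.mpr fun a ha hb => hb.2 ha.1)
      (by
        intro i
        rcases hmem i with h | h
        · by_cases h2 : I.f i ∈ I.M2
          · exact Or.inr (Or.inr ⟨h, h2⟩)
          · exact Or.inr (Or.inl ⟨h, h2⟩)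
        · by_cases h1 : I.f i ∈ I.M1
          · exact Or.inr (Or.inr ⟨h1, h⟩)
          · exact Or.inl ⟨h, h1⟩)
    refine Nat.sInf_le ⟨max rjc r12, r12, GB, GA, ?_, (add_comm _ _)⟩
    intro i
    obtain ⟨D, hD⟩ := hdec i
    exact ⟨fun y1 y2 si => D y2 y1 si, fun x => hD x⟩
end

section
/- Let I be a TGICP, j ∈ {1,2}, and j^c the other index; write r_A = mrk_A for A ∈ {1, 2, 12} and assume r_{12} ≥ r_j. Assume hypotheses (a), (b), (c): (a) there exist completions F^{(1)} ≈ F_x^{(1)}, F^{(2)} ≈ F_x^{(2)} of ranks r_1, r_2 that realize F̃_x as a joint extension of the type of the joint-extension theorem; (b) there is a completion F^{(12)} ≈ F_x^{(12)} of rank r_{12} whose first r_{12} rows span its row space, with P^{(12)} the matrix such that the last rows of F^{(12)} equal P^{(12)} F^{(12)}_{[r_{12}]}; (c) with F̂^{(j)} := F^{(j)}_{[r_j]} with r_{12} − r_j zero rows appended, the stacked matrix [F̂^{(j)}; P^{(12)} F̂^{(j)}] vanishes at every entry at which the corresponding receiver with demand in P_{12} does not have the corresponding P_j-message in its side information. Assume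 additionally that r_{j^c} ≥ r_{12} and that either no receiver with demand in P_{j^c} has side information in P_{12} or no receiver with demand in P_{12} has side information in P_{j^c} (as in the Case II-E interaction digraphs H_58–H_60). Then l*_q(I) = r_{j^c} + r_{12}. -/
open scoped Classical

/-! ### Auxiliary lemmas -/

section Helpers
open Matrix

lemma rank_add_rank_le_fromBlocks_zero12 {K : Type*} [Field K]
    {m₁ m₂ n₁ n₂ : Type*} [Fintype m₁] [Fintype m₂] [Fintype n₁] [Fintype n₂]
    (A : Matrix m₁ n₁ K) (C : Matrix m₂ n₁ K) (B : Matrix m₂ n₂ K) :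
    A.rank + B.rank ≤ (Matrix.fromBlocks A 0 C B).rank := by
  classical
  set T := (Matrix.fromBlocks A 0 C B).mulVecLin with hT
  set V := LinearMap.range T with hV
  let π : ((m₁ ⊕ m₂) → K) →ₗ[K] (m₁ → K) := LinearMap.funLeft K K Sum.inl
  let g : V →ₗ[K] (m₁ → K) := π.comp V.subtype
  have hdim : Module.finrank K (LinearMap.range g) + Module.finrank K (LinearMap.ker g)
      = Module.finrank K V := LinearMap.finrank_range_add_finrank_ker g
  have h1 : A.rank ≤ Module.finrank K (LinearMap.range g) := by
    have hle : LinearMap.range A.mulVecLin ≤ LinearMap.range g := by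
      rintro y ⟨x1, rfl⟩
      refine ⟨⟨T (Sum.elim x1 0), LinearMap.mem_range_self _ _⟩, ?_⟩
      show π (T (Sum.elim x1 0)) = _
      have : T (Sum.elim x1 0) = (Matrix.fromBlocks A 0 C B).mulVec (Sum.elim x1 0) := rfl
      rw [this, Matrix.fromBlocks_mulVec]
      ext i
      simp [π, LinearMap.funLeft, Matrix.mulVecLin_apply]
    exact Submodule.finrank_mono hle
  let ι₂ : (m₂ → K) →ₗ[K] ((m₁ ⊕ m₂) → K) :=
    { toFun := fun v => Sum.elim 0 v
      map_add' := by intro u v; ext (i | i) <;> simp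
      map_smul' := by intro c v; ext (i | i) <;> simp }
  have hι₂inj : Function.Injective ι₂ := by
    intro u v h
    ext i
    exact congrFun h (Sum.inr i)
  have h2 : B.rank ≤ Module.finrank K (LinearMap.ker g) := by
    have hker : LinearMap.ker g = Submodule.comap V.subtype (LinearMap.ker π ⊓ V) := by
      ext x
      simp [g, LinearMap.mem_ker, Submodule.mem_comap, x.2]
    have hle : Submodule.map ι₂ (LinearMap.range B.mulVecLin) ≤ LinearMap.ker π ⊓ V := by
      rintro y ⟨y', ⟨x2, rfl⟩, rfl⟩
      constructor
      · ext i
        simp [π, LinearMap.funLeft, ι₂]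
      · refine ⟨Sum.elim 0 x2, ?_⟩
        have : T (Sum.elim 0 x2) = (Matrix.fromBlocks A 0 C B).mulVec (Sum.elim 0 x2) := rfl
        rw [this, Matrix.fromBlocks_mulVec]
        ext (i | i) <;> simp [ι₂, Matrix.mulVecLin_apply]
    calc B.rank = Module.finrank K (Submodule.map ι₂ (LinearMap.range B.mulVecLin)) :=
          LinearEquiv.finrank_eq (Submodule.equivMapOfInjective ι₂ hι₂inj _)
      _ ≤ Module.finrank K (LinearMap.ker π ⊓ V : Submodule K _) := Submodule.finrank_mono hle
      _ = Module.finrank K (LinearMap.ker g) := by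
          rw [hker]
          exact (LinearEquiv.finrank_eq (Submodule.comapSubtypeEquivOfLe inf_le_right)).symm
  calc A.rank + B.rank
      ≤ Module.finrank K (LinearMap.range g) + Module.finrank K (LinearMap.ker g) :=
        Nat.add_le_add h1 h2
    _ = Module.finrank K V := hdim
    _ = (Matrix.fromBlocks A 0 C B).rank := rfl

lemma rank_add_rank_le_fromBlocks_zero21 {K : Type*} [Field K]
    {m₁ m₂ n₁ n₂ : Type*} [Fintype m₁] [Fintype m₂] [Fintype n₁] [Fintype n₂]
    (A : Matrix m₁ n₁ K) (X : Matrix m₁ n₂ K) (B : Matrix m₂ n₂ K) :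
    A.rank + B.rank ≤ (Matrix.fromBlocks A X 0 B).rank := by
  have h := rank_add_rank_le_fromBlocks_zero12 Aᵀ Xᵀ Bᵀ
  rw [Matrix.rank_transpose, Matrix.rank_transpose] at h
  refine h.trans ?_
  rw [← Matrix.rank_transpose (Matrix.fromBlocks A X 0 B), Matrix.fromBlocks_transpose]
  simp

lemma sum_subtype_eq {M : Type*} [AddCommMonoid M] {q : ℕ} (S : Set (Fin q))
    (g : Fin q → M) (hg : ∀ p, p ∉ S → g p = 0) :
    (∑ s : ↥S, g s.1) = ∑ p, g p := by
  classical
  have h1 : ∑ p ∈ S.toFinset, g p = ∑ s : ↥S, g s.1 :=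
    Finset.sum_subtype S.toFinset (fun x => Set.mem_toFinset) g
  rw [← h1]
  exact Finset.sum_subset (Finset.subset_univ S.toFinset)
    (fun x _ hx => hg x (by simpa using hx))

lemma sum_extend {M : Type*} [AddCommMonoid M] {r N : ℕ} (h : r ≤ N) (g : Fin N → M)
    (hg : ∀ t : Fin N, r ≤ (t : ℕ) → g t = 0) :
    ∑ t, g t = ∑ s : Fin r, g (Fin.castLE h s) := by
  set f : ℕ → M := fun i => if hi : i < N then g ⟨i, hi⟩ else 0 with hf
  have h1 : ∑ t : Fin N, g t = ∑ i ∈ Finset.range N, f i := by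
    rw [← Fin.sum_univ_eq_sum_range f N]
    exact Finset.sum_congr rfl fun t _ => by simp [hf, t.2]
  have h2 : ∑ s : Fin r, g (Fin.castLE h s) = ∑ i ∈ Finset.range r, f i := by
    rw [← Fin.sum_univ_eq_sum_range f r]
    refine Finset.sum_congr rfl fun s _ => ?_
    have hs : (s : ℕ) < N := lt_of_lt_of_le s.2 h
    simp only [hf, dif_pos hs]
    rfl
  rw [h1, h2]
  exact (Finset.sum_subset (Finset.range_subset_range.2 h) (fun i hi hni => by
    have hiN : i < N := Finset.mem_range.1 hi
    have hir : r ≤ i := le_of_not_gt (fun hc => hni (Finset.mem_range.2 hc))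
    simp only [hf, dif_pos hiN]
    exact hg _ hir)).symm

noncomputable def del {K : Type*} [Field K] {N r : ℕ} (Pm : Matrix (Fin N) (Fin r) K)
    (k : Fin N) : Fin r → K :=
  fun t => if _ : (k : ℕ) < r then (if (t : ℕ) = (k : ℕ) then 1 else 0) else Pm k t

lemma del_sum {K : Type*} [Field K] {N r : ℕ} (Pm : Matrix (Fin N) (Fin r) K)
    (k : Fin N) (g : Fin r → K) :
    ∑ t, del Pm k t * g t = if h : (k : ℕ) < r then g ⟨k, h⟩ else ∑ t, Pm k t * g t := by
  by_cases h : (k : ℕ) < r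
  · simp only [del, dif_pos h]
    rw [Finset.sum_eq_single (⟨(k : ℕ), h⟩ : Fin r)]
    · simp
    · intro t _ ht
      rw [if_neg (fun hc => ht (Fin.ext hc)), zero_mul]
    · simp
  · simp [del, dif_neg h]

lemma sum_del_eq_stacked {K : Type*} [Field K] {N r m' : ℕ}
    (Pm : Matrix (Fin N) (Fin r) K) (Fh : Matrix (Fin r) (Fin m') K) (k : Fin N) (c : Fin m') :
    ∑ t, del Pm k t * Fh t c = stacked Pm Fh k c := by
  rw [del_sum]
  rfl

lemma del_row {K : Type*} [Field K] {N r mA : ℕ} (Pm : Matrix (Fin N) (Fin r) K)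
    (k : Fin N) (F : Matrix (Fin N) (Fin mA) K) (h : r ≤ N)
    (hP : ∀ kk : Fin N, r ≤ (kk : ℕ) → ∀ c, F kk c = ∑ t, Pm kk t * F (Fin.castLE h t) c)
    (c : Fin mA) :
    ∑ t, del Pm k t * F (Fin.castLE h t) c = F k c := by
  rw [del_sum]
  by_cases hk : (k : ℕ) < r
  · rw [dif_pos hk]
    congr 1
  · rw [dif_neg hk]
    exact (hP k (le_of_not_gt hk) c).symm

end Helpers

section Achieve

open Matrix

variable {K : Type*} [Field K] {m n : ℕ}

lemma decode_core (I : TGICP m n) (i : Fin n) (v x : Fin m → K)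
    (h1 : v (I.f i) = 1) (h0 : ∀ p, p ≠ I.f i → p ∉ I.χ i → v p = 0) :
    (∑ p, v p * x p) - (∑ c : ↥(I.χ i), v c.1 * x c.1) = x (I.f i) := by
  classical
  have hs : ∑ p ∈ (I.χ i).toFinset, v p * x p = ∑ c : ↥(I.χ i), v c.1 * x c.1 :=
    Finset.sum_subtype ((I.χ i).toFinset) (fun y => Set.mem_toFinset) (fun p => v p * x p)
  rw [← hs, ← Finset.sum_sdiff (Finset.subset_univ (I.χ i).toFinset), add_sub_cancel_right]
  rw [Finset.sum_eq_single_of_mem (I.f i)]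
  · rw [h1, one_mul]
  · refine Finset.mem_sdiff.2 ⟨Finset.mem_univ _, ?_⟩
    simpa using I.not_mem i
  · intro p hp hpne
    have hpχ : p ∉ I.χ i := by
      have := (Finset.mem_sdiff.1 hp).2
      simpa using this
    rw [h0 p hpne hpχ, zero_mul]

lemma exists_code_aux (I : TGICP m n) (Sa Sb : Set (Fin m))
    (hU : Sa ∪ Sb = Set.univ) (h12 : I.M1 ∩ I.M2 = Sa ∩ Sb)
    (Pj Pjc : Set (Fin m)) (hPjdef : Pj = Sa \ Sb) (hPjcdef : Pjc = Sb \ Sa)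
    (rj rjc r12 : ℕ) (hord : rj ≤ r12) (hord2 : r12 ≤ rjc)
    {nj mj njc mjc n12 m12 : ℕ}
    (eRj : Fin nj ≃ {i : Fin n // I.f i ∈ Pj}) (eMj : Fin mj ≃ ↥Pj)
    (eRjc : Fin njc ≃ {i : Fin n // I.f i ∈ Pjc}) (eMjc : Fin mjc ≃ ↥Pjc)
    (eR12 : Fin n12 ≃ {i : Fin n // I.f i ∈ I.M1 ∩ I.M2})
    (eM12 : Fin m12 ≃ ↥(I.M1 ∩ I.M2))
    (Fj : Matrix (Fin nj) (Fin mj) K) (Fjc : Matrix (Fin njc) (Fin mjc) K)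
    (F12 : Matrix (Fin n12) (Fin m12) K)
    (hFj : SubCompletes I Pj eRj eMj Fj) (hFjc : SubCompletes I Pjc eRjc eMjc Fjc)
    (hF12 : SubCompletes I (I.M1 ∩ I.M2) eR12 eM12 F12)
    (hnj : rj ≤ nj) (hnjc : rjc ≤ njc) (hn12 : r12 ≤ n12)
    (Pjm : Matrix (Fin nj) (Fin rj) K) (Pjcm : Matrix (Fin njc) (Fin rjc) K)
    (P12m : Matrix (Fin n12) (Fin r12) K)
    (hRj : ∀ k : Fin nj, rj ≤ (k : ℕ) →
      ∀ c, Fj k c = ∑ t, Pjm k t * Fj (Fin.castLE hnj t) c)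
    (hRjc : ∀ k : Fin njc, rjc ≤ (k : ℕ) →
      ∀ c, Fjc k c = ∑ t, Pjcm k t * Fjc (Fin.castLE hnjc t) c)
    (hR12 : ∀ k : Fin n12, r12 ≤ (k : ℕ) →
      ∀ c, F12 k c = ∑ t, P12m k t * F12 (Fin.castLE hn12 t) c)
    (hJE1 : ∀ (k : Fin nj) (c : Fin mjc), (eMjc c).1 ∉ I.χ (eRj k).1 →
      stacked Pjm (padFirst rj rjc hnjc Fjc) k c = 0)
    (hJE2 : ∀ (k : Fin njc) (c : Fin mj), (eMj c).1 ∉ I.χ (eRjc k).1 →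
      stacked Pjcm (padFirst rjc rj hnj Fj) k c = 0)
    (hc : ∀ (k : Fin n12) (c : Fin mj), (eMj c).1 ∉ I.χ (eR12 k).1 →
      stacked P12m (padFirst r12 rj hnj Fj) k c = 0) :
    ∃ (Ga : Matrix (Fin r12) ↥Sa K) (Gb : Matrix (Fin rjc) ↥Sb K),
      ∀ i : Fin n, ∃ D : (Fin r12 → K) → (Fin rjc → K) → (↥(I.χ i) → K) → K,
        ∀ x : Fin m → K,
          D (Ga.mulVec fun s => x s.1) (Gb.mulVec fun s => x s.1) (fun s => x s.1)
            = x (I.f i) := by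
  classical
  have hrjrjc : rj ≤ rjc := hord.trans hord2
  -- membership facts
  have hPjSa : ∀ p ∈ Pj, p ∈ Sa := fun p hp => by rw [hPjdef] at hp; exact hp.1
  have hPjSb : ∀ p ∈ Pj, p ∉ Sb := fun p hp => by rw [hPjdef] at hp; exact hp.2
  have hPjcSb : ∀ p ∈ Pjc, p ∈ Sb := fun p hp => by rw [hPjcdef] at hp; exact hp.1
  have hPjcSa : ∀ p ∈ Pjc, p ∉ Sa := fun p hp => by rw [hPjcdef] at hp; exact hp.2
  have h12Sa : ∀ p ∈ I.M1 ∩ I.M2, p ∈ Sa := fun p hp => by rw [h12] at hp; exact hp.1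
  have h12Sb : ∀ p ∈ I.M1 ∩ I.M2, p ∈ Sb := fun p hp => by rw [h12] at hp; exact hp.2
  -- the two code matrices, given by row vectors over all of `Fin m`
  set a : Fin r12 → Fin m → K := fun t p =>
    if h : p ∈ Pj then padFirst r12 rj hnj Fj t (eMj.symm ⟨p, h⟩)
    else if h2 : p ∈ I.M1 ∩ I.M2 then F12 (Fin.castLE hn12 t) (eM12.symm ⟨p, h2⟩) else 0
    with ha_def
  set b : Fin rjc → Fin m → K := fun t p =>
    if h : p ∈ Pjc then Fjc (Fin.castLE hnjc t) (eMjc.symm ⟨p, h⟩)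
    else if h2 : p ∈ I.M1 ∩ I.M2 then padFirst rjc r12 hn12 F12 t (eM12.symm ⟨p, h2⟩) else 0
    with hb_def
  have haz : ∀ t p, p ∉ Sa → a t p = 0 := by
    intro t p hp
    have h1 : p ∉ Pj := fun hcon => hp (hPjSa p hcon)
    have h2 : p ∉ I.M1 ∩ I.M2 := fun hcon => hp (h12Sa p hcon)
    simp only [ha_def]; rw [dif_neg h1, dif_neg h2]
  have hbz : ∀ t p, p ∉ Sb → b t p = 0 := by
    intro t p hp
    have h1 : p ∉ Pjc := fun hcon => hp (hPjcSb p hcon)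
    have h2 : p ∉ I.M1 ∩ I.M2 := fun hcon => hp (h12Sb p hcon)
    simp only [hb_def]; rw [dif_neg h1, dif_neg h2]
  refine ⟨Matrix.of (fun t (s : ↥Sa) => a t s.1), Matrix.of (fun t (s : ↥Sb) => b t s.1), ?_⟩
  intro i
  have hGa : ∀ x : Fin m → K,
      (Matrix.of (fun t (s : ↥Sa) => a t s.1)).mulVec (fun s : ↥Sa => x s.1)
        = fun t => ∑ p, a t p * x p := by
    intro x
    funext t
    simp only [Matrix.mulVec, dotProduct, Matrix.of_apply]
    exact sum_subtype_eq Sa (fun p => a t p * x p)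
      (fun p hp => by show a t p * x p = 0; rw [haz t p hp, zero_mul])
  have hGb : ∀ x : Fin m → K,
      (Matrix.of (fun t (s : ↥Sb) => b t s.1)).mulVec (fun s : ↥Sb => x s.1)
        = fun t => ∑ p, b t p * x p := by
    intro x
    funext t
    simp only [Matrix.mulVec, dotProduct, Matrix.of_apply]
    exact sum_subtype_eq Sb (fun p => b t p * x p)
      (fun p hp => by show b t p * x p = 0; rw [hbz t p hp, zero_mul])
  -- the general decoder, given coefficient vectors ν, μ
  have main : ∀ (ν : Fin r12 → K) (μ : Fin rjc → K),
      (let v : Fin m → K := fun p => (∑ s, ν s * a s p) + (∑ t, μ t * b t p)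
       v (I.f i) = 1 ∧ ∀ p, p ≠ I.f i → p ∉ I.χ i → v p = 0) →
      ∃ D : (Fin r12 → K) → (Fin rjc → K) → (↥(I.χ i) → K) → K,
        ∀ x : Fin m → K,
          D ((Matrix.of (fun t (s : ↥Sa) => a t s.1)).mulVec fun s => x s.1)
            ((Matrix.of (fun t (s : ↥Sb) => b t s.1)).mulVec fun s => x s.1)
            (fun s => x s.1) = x (I.f i) := by
    intro ν μ hv
    set v : Fin m → K := fun p => (∑ s, ν s * a s p) + (∑ t, μ t * b t p) with hv_def
    refine ⟨fun y z s =>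
      ((∑ t, ν t * y t) + (∑ t, μ t * z t)) - ∑ c : ↥(I.χ i), v c.1 * s c, ?_⟩
    intro x
    rw [hGa x, hGb x]
    beta_reduce
    have hcombo : ((∑ t, ν t * ∑ p, a t p * x p) + (∑ t, μ t * ∑ p, b t p * x p))
        = ∑ p, v p * x p := by
      simp only [Finset.mul_sum]
      rw [Finset.sum_comm (f := fun t p => ν t * (a t p * x p)),
        Finset.sum_comm (f := fun t p => μ t * (b t p * x p)),
        ← Finset.sum_add_distrib]
      refine Finset.sum_congr rfl fun p _ => ?_
      simp only [hv_def, add_mul, Finset.sum_mul, mul_assoc]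
    rw [hcombo]
    exact decode_core I i v x hv.1 hv.2
  -- receiver classification
  have hclass : I.f i ∈ Pj ∨ I.f i ∈ Pjc ∨ I.f i ∈ I.M1 ∩ I.M2 := by
    have hmem : I.f i ∈ Sa ∪ Sb := by rw [hU]; trivial
    by_cases hA : I.f i ∈ Sa
    · by_cases hB : I.f i ∈ Sb
      · exact Or.inr (Or.inr (by rw [h12]; exact ⟨hA, hB⟩))
      · exact Or.inl (by rw [hPjdef]; exact ⟨hA, hB⟩)
    · refine Or.inr (Or.inl (by rw [hPjcdef]; exact ⟨hmem.resolve_left hA, hA⟩))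
  rcases hclass with hcase | hcase | hcase
  · -- demand in Pj
    set k : Fin nj := eRj.symm ⟨i, hcase⟩ with hk_def
    have hki : (eRj k).1 = i := by rw [hk_def, Equiv.apply_symm_apply]
    set ν : Fin r12 → K := fun s => if h : (s : ℕ) < rj then del Pjm k ⟨s, h⟩ else 0
      with hν_def
    set μ : Fin rjc → K := fun t => if h : (t : ℕ) < rj then -del Pjm k ⟨t, h⟩ else 0
      with hμ_def
    apply main ν μ
    set v : Fin m → K := fun p => (∑ s, ν s * a s p) + (∑ t, μ t * b t p) with hv_def
    have hvPj : ∀ p (hp : p ∈ Pj), v p = Fj k (eMj.symm ⟨p, hp⟩) := by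
      intro p hp
      have hb0 : ∀ t, b t p = 0 := fun t => by
        have h1 : p ∉ Pjc := fun hcon => hPjcSa p hcon (hPjSa p hp)
        have h2 : p ∉ I.M1 ∩ I.M2 := fun hcon => hPjSb p hp (h12Sb p hcon)
        simp only [hb_def]; rw [dif_neg h1, dif_neg h2]
      have ha' : ∀ s : Fin r12, a s p = padFirst r12 rj hnj Fj s (eMj.symm ⟨p, hp⟩) :=
        fun s => by simp only [ha_def]; rw [dif_pos hp]
      simp only [hv_def, hb0, mul_zero, Finset.sum_const_zero, add_zero, ha']
      rw [sum_extend hord (fun s => ν s * padFirst r12 rj hnj Fj s (eMj.symm ⟨p, hp⟩))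
        (fun s hs => by rw [hν_def]; simp only [dif_neg (not_lt.2 hs)]; exact zero_mul _)]
      have hterm : ∀ t : Fin rj,
          ν (Fin.castLE hord t) * padFirst r12 rj hnj Fj (Fin.castLE hord t) (eMj.symm ⟨p, hp⟩)
            = del Pjm k t * Fj (Fin.castLE hnj t) (eMj.symm ⟨p, hp⟩) := by
        intro t
        have ht : ((Fin.castLE hord t : Fin r12) : ℕ) < rj := t.2
        rw [hν_def]
        simp only [padFirst, Matrix.of_apply, dif_pos ht]
        rfl
      rw [Finset.sum_congr rfl fun t _ => hterm t]
      exact del_row Pjm k Fj hnj hRj _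
    have hvPjc : ∀ p (hp : p ∈ Pjc),
        v p = -(stacked Pjm (padFirst rj rjc hnjc Fjc) k (eMjc.symm ⟨p, hp⟩)) := by
      intro p hp
      have ha0 : ∀ s, a s p = 0 :=
        fun s => haz s p (hPjcSa p hp)
      have hb' : ∀ t : Fin rjc, b t p = Fjc (Fin.castLE hnjc t) (eMjc.symm ⟨p, hp⟩) :=
        fun t => by simp only [hb_def]; rw [dif_pos hp]
      simp only [hv_def, ha0, mul_zero, Finset.sum_const_zero, zero_add, hb']
      rw [sum_extend hrjrjc (fun t => μ t * Fjc (Fin.castLE hnjc t) (eMjc.symm ⟨p, hp⟩))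
        (fun t ht => by rw [hμ_def]; simp only [dif_neg (not_lt.2 ht)]; exact zero_mul _)]
      have hterm : ∀ t : Fin rj,
          μ (Fin.castLE hrjrjc t) * Fjc (Fin.castLE hnjc (Fin.castLE hrjrjc t)) (eMjc.symm ⟨p, hp⟩)
            = -(del Pjm k t * padFirst rj rjc hnjc Fjc t (eMjc.symm ⟨p, hp⟩)) := by
        intro t
        have ht : ((Fin.castLE hrjrjc t : Fin rjc) : ℕ) < rj := t.2
        rw [hμ_def]
        simp only [dif_pos ht, padFirst, Matrix.of_apply, dif_pos (lt_of_lt_of_le t.2 hrjrjc)]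
        rw [neg_mul]
        rfl
      rw [Finset.sum_congr rfl fun t _ => hterm t, Finset.sum_neg_distrib,
        sum_del_eq_stacked]
    have hv12 : ∀ p, p ∈ I.M1 ∩ I.M2 → v p = 0 := by
      intro p hp
      have hp1 : p ∉ Pj := fun hcon => hPjSb p hcon (h12Sb p hp)
      have hp2 : p ∉ Pjc := fun hcon => hPjcSa p hcon (h12Sa p hp)
      have ha' : ∀ s : Fin r12, a s p = F12 (Fin.castLE hn12 s) (eM12.symm ⟨p, hp⟩) :=
        fun s => by simp only [ha_def]; rw [dif_neg hp1, dif_pos hp]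
      have hb' : ∀ t : Fin rjc, b t p = padFirst rjc r12 hn12 F12 t (eM12.symm ⟨p, hp⟩) :=
        fun t => by simp only [hb_def]; rw [dif_neg hp2, dif_pos hp]
      simp only [hv_def, ha', hb']
      rw [sum_extend hord (fun s => ν s * F12 (Fin.castLE hn12 s) (eM12.symm ⟨p, hp⟩))
        (fun s hs => by rw [hν_def]; simp only [dif_neg (not_lt.2 hs)]; exact zero_mul _),
        sum_extend hrjrjc (fun t => μ t * padFirst rjc r12 hn12 F12 t (eM12.symm ⟨p, hp⟩))
        (fun t ht => by rw [hμ_def]; simp only [dif_neg (not_lt.2 ht)]; exact zero_mul _),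
        ← Finset.sum_add_distrib]
      refine Finset.sum_eq_zero fun t _ => ?_
      have ht1 : ((Fin.castLE hord t : Fin r12) : ℕ) < rj := t.2
      have ht2 : ((Fin.castLE hrjrjc t : Fin rjc) : ℕ) < rj := t.2
      have ht3 : ((Fin.castLE hrjrjc t : Fin rjc) : ℕ) < r12 := lt_of_lt_of_le t.2 hord
      rw [hν_def, hμ_def]
      simp only [dif_pos ht1, dif_pos ht2, padFirst, Matrix.of_apply, dif_pos ht3]
      rw [neg_mul]
      exact add_neg_cancel _
    constructor
    · have h1 := hvPj (I.f i) hcase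
      rw [h1]
      refine (hFj k (eMj.symm ⟨I.f i, hcase⟩)).1 ?_
      rw [hki]
      simp
    · intro p hpne hpχ
      by_cases hp : p ∈ Pj
      · rw [hvPj p hp]
        refine (hFj k (eMj.symm ⟨p, hp⟩)).2 ?_ ?_ <;> rw [hki] <;> simp [hpne, hpχ]
      · by_cases hp2 : p ∈ Pjc
        · rw [hvPjc p hp2, hJE1 k (eMjc.symm ⟨p, hp2⟩) (by rw [hki]; simpa using hpχ),
            neg_zero]
        · by_cases hp3 : p ∈ I.M1 ∩ I.M2
          · exact hv12 p hp3
          · have ha0 : ∀ s, a s p = 0 := fun s => by simp only [ha_def]; rw [dif_neg hp, dif_neg hp3]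
            have hb0 : ∀ t, b t p = 0 := fun t => by simp only [hb_def]; rw [dif_neg hp2, dif_neg hp3]
            simp [hv_def, ha0, hb0]
  · -- demand in Pjc
    set k : Fin njc := eRjc.symm ⟨i, hcase⟩ with hk_def
    have hki : (eRjc k).1 = i := by rw [hk_def, Equiv.apply_symm_apply]
    set μ : Fin rjc → K := del Pjcm k with hμ_def
    set ν : Fin r12 → K := fun s => -μ (Fin.castLE hord2 s) with hν_def
    apply main ν μ
    set v : Fin m → K := fun p => (∑ s, ν s * a s p) + (∑ t, μ t * b t p) with hv_def
    have hvPjc : ∀ p (hp : p ∈ Pjc), v p = Fjc k (eMjc.symm ⟨p, hp⟩) := by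
      intro p hp
      have ha0 : ∀ s, a s p = 0 := fun s => haz s p (hPjcSa p hp)
      have hb' : ∀ t : Fin rjc, b t p = Fjc (Fin.castLE hnjc t) (eMjc.symm ⟨p, hp⟩) :=
        fun t => by simp only [hb_def]; rw [dif_pos hp]
      simp only [hv_def, ha0, mul_zero, Finset.sum_const_zero, zero_add, hb']
      exact del_row Pjcm k Fjc hnjc hRjc _
    have hvPj : ∀ p (hp : p ∈ Pj),
        v p = -(stacked Pjcm (padFirst rjc rj hnj Fj) k (eMj.symm ⟨p, hp⟩)) := by
      intro p hp
      have hb0 : ∀ t, b t p = 0 := fun t => by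
        have h1 : p ∉ Pjc := fun hcon => hPjcSa p hcon (hPjSa p hp)
        have h2 : p ∉ I.M1 ∩ I.M2 := fun hcon => hPjSb p hp (h12Sb p hcon)
        simp only [hb_def]; rw [dif_neg h1, dif_neg h2]
      have ha' : ∀ s : Fin r12, a s p = padFirst r12 rj hnj Fj s (eMj.symm ⟨p, hp⟩) :=
        fun s => by simp only [ha_def]; rw [dif_pos hp]
      simp only [hv_def, hb0, mul_zero, Finset.sum_const_zero, add_zero, ha']
      have hsum : ∑ t : Fin rjc, μ t * padFirst rjc rj hnj Fj t (eMj.symm ⟨p, hp⟩)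
          = ∑ s : Fin r12,
              μ (Fin.castLE hord2 s) * padFirst r12 rj hnj Fj s (eMj.symm ⟨p, hp⟩) := by
        rw [sum_extend hord2 (fun t => μ t * padFirst rjc rj hnj Fj t (eMj.symm ⟨p, hp⟩))
          (fun t ht => by
            have : ¬ ((t : ℕ) < rj) := not_lt.2 (hord.trans ht)
            simp only [padFirst, Matrix.of_apply, dif_neg this]
            exact mul_zero _)]
        refine Finset.sum_congr rfl fun s _ => ?_
        congr 1
      rw [show (fun s => ν s * padFirst r12 rj hnj Fj s (eMj.symm ⟨p, hp⟩))
          = fun s => -(μ (Fin.castLE hord2 s) * padFirst r12 rj hnj Fj s (eMj.symm ⟨p, hp⟩))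
          from funext fun s => by rw [hν_def]; exact neg_mul _ _,
        Finset.sum_neg_distrib, ← hsum, sum_del_eq_stacked]
    have hv12 : ∀ p, p ∈ I.M1 ∩ I.M2 → v p = 0 := by
      intro p hp
      have hp1 : p ∉ Pj := fun hcon => hPjSb p hcon (h12Sb p hp)
      have hp2 : p ∉ Pjc := fun hcon => hPjcSa p hcon (h12Sa p hp)
      have ha' : ∀ s : Fin r12, a s p = F12 (Fin.castLE hn12 s) (eM12.symm ⟨p, hp⟩) :=
        fun s => by simp only [ha_def]; rw [dif_neg hp1, dif_pos hp]
      have hb' : ∀ t : Fin rjc, b t p = padFirst rjc r12 hn12 F12 t (eM12.symm ⟨p, hp⟩) :=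
        fun t => by simp only [hb_def]; rw [dif_neg hp2, dif_pos hp]
      simp only [hv_def, ha', hb']
      have hsum : ∑ t : Fin rjc, μ t * padFirst rjc r12 hn12 F12 t (eM12.symm ⟨p, hp⟩)
          = ∑ s : Fin r12, μ (Fin.castLE hord2 s) * F12 (Fin.castLE hn12 s) (eM12.symm ⟨p, hp⟩) := by
        rw [sum_extend hord2 (fun t => μ t * padFirst rjc r12 hn12 F12 t (eM12.symm ⟨p, hp⟩))
          (fun t ht => by
            simp only [padFirst, Matrix.of_apply, dif_neg (not_lt.2 ht)]
            exact mul_zero _)]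
        refine Finset.sum_congr rfl fun s _ => ?_
        have hs : ((Fin.castLE hord2 s : Fin rjc) : ℕ) < r12 := s.2
        simp only [padFirst, Matrix.of_apply, dif_pos hs]
        rfl
      rw [hsum, show (fun s => ν s * F12 (Fin.castLE hn12 s) (eM12.symm ⟨p, hp⟩))
          = fun s => -(μ (Fin.castLE hord2 s) * F12 (Fin.castLE hn12 s) (eM12.symm ⟨p, hp⟩))
          from funext fun s => by rw [hν_def]; exact neg_mul _ _,
        Finset.sum_neg_distrib]
      exact neg_add_cancel _
    constructor
    · have h1 := hvPjc (I.f i) hcase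
      rw [h1]
      refine (hFjc k (eMjc.symm ⟨I.f i, hcase⟩)).1 ?_
      rw [hki]
      simp
    · intro p hpne hpχ
      by_cases hp : p ∈ Pjc
      · rw [hvPjc p hp]
        refine (hFjc k (eMjc.symm ⟨p, hp⟩)).2 ?_ ?_ <;> rw [hki] <;> simp [hpne, hpχ]
      · by_cases hp2 : p ∈ Pj
        · rw [hvPj p hp2, hJE2 k (eMj.symm ⟨p, hp2⟩) (by rw [hki]; simpa using hpχ),
            neg_zero]
        · by_cases hp3 : p ∈ I.M1 ∩ I.M2
          · exact hv12 p hp3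
          · have ha0 : ∀ s, a s p = 0 := fun s => by simp only [ha_def]; rw [dif_neg hp2, dif_neg hp3]
            have hb0 : ∀ t, b t p = 0 := fun t => by simp only [hb_def]; rw [dif_neg hp, dif_neg hp3]
            simp [hv_def, ha0, hb0]
  · -- demand in P12
    set k : Fin n12 := eR12.symm ⟨i, hcase⟩ with hk_def
    have hki : (eR12 k).1 = i := by rw [hk_def, Equiv.apply_symm_apply]
    set ν : Fin r12 → K := del P12m k with hν_def
    apply main ν 0
    set v : Fin m → K := fun p => (∑ s, ν s * a s p) + (∑ t, (0 : Fin rjc → K) t * b t p)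
      with hv_def
    have hvz : ∀ p, v p = ∑ s, ν s * a s p := by
      intro p
      simp [hv_def]
    have hvPj : ∀ p (hp : p ∈ Pj),
        v p = stacked P12m (padFirst r12 rj hnj Fj) k (eMj.symm ⟨p, hp⟩) := by
      intro p hp
      have ha' : ∀ s : Fin r12, a s p = padFirst r12 rj hnj Fj s (eMj.symm ⟨p, hp⟩) :=
        fun s => by simp only [ha_def]; rw [dif_pos hp]
      rw [hvz]
      simp only [ha']
      exact sum_del_eq_stacked P12m (padFirst r12 rj hnj Fj) k _
    have hv12 : ∀ p (hp1 : p ∉ Pj) (hp : p ∈ I.M1 ∩ I.M2),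
        v p = F12 k (eM12.symm ⟨p, hp⟩) := by
      intro p hp1 hp
      have ha' : ∀ s : Fin r12, a s p = F12 (Fin.castLE hn12 s) (eM12.symm ⟨p, hp⟩) :=
        fun s => by simp only [ha_def]; rw [dif_neg hp1, dif_pos hp]
      rw [hvz]
      simp only [ha']
      exact del_row P12m k F12 hn12 hR12 _
    constructor
    · have hp1 : I.f i ∉ Pj := fun hcon => hPjSb _ hcon (h12Sb _ hcase)
      rw [hv12 (I.f i) hp1 hcase]
      refine (hF12 k (eM12.symm ⟨I.f i, hcase⟩)).1 ?_
      rw [hki]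
      simp
    · intro p hpne hpχ
      by_cases hp : p ∈ Pj
      · rw [hvPj p hp]
        exact hc k (eMj.symm ⟨p, hp⟩) (by rw [hki]; simpa using hpχ)
      · by_cases hp3 : p ∈ I.M1 ∩ I.M2
        · rw [hv12 p hp hp3]
          refine (hF12 k (eM12.symm ⟨p, hp3⟩)).2 ?_ ?_ <;> rw [hki] <;> simp [hpne, hpχ]
        · have ha0 : ∀ s, a s p = 0 := fun s => by simp only [ha_def]; rw [dif_neg hp, dif_neg hp3]
          rw [hvz]
          simp [ha0]

end Achieve

section Lower

open Matrix

variable {K : Type*} [Field K] {m n : ℕ}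

noncomputable def extRow {q l : ℕ} (S : Set (Fin q)) (G : Matrix (Fin l) ↥S K) :
    Fin l → Fin q → K :=
  fun t p => if h : p ∈ S then G t ⟨p, h⟩ else 0

lemma extRow_mulVec {q l : ℕ} (S : Set (Fin q)) (G : Matrix (Fin l) ↥S K)
    (x : Fin q → K) (t : Fin l) :
    G.mulVec (fun s : ↥S => x s.1) t = ∑ p, extRow S G t p * x p := by
  classical
  simp only [Matrix.mulVec, dotProduct]
  rw [← sum_subtype_eq S (fun p => extRow S G t p * x p)
    (fun p hp => by show extRow S G t p * x p = 0; simp [extRow, hp])]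
  refine Finset.sum_congr rfl fun c _ => ?_
  show G t c * x c.1 = extRow S G t c.1 * x c.1
  simp [extRow, c.2]

lemma exists_decoding_vector {l1 l2 : ℕ} (I : TGICP m n)
    (G1 : Matrix (Fin l1) ↥I.M1 K) (G2 : Matrix (Fin l2) ↥I.M2 K)
    (hcode : I.IsCode K G1 G2) (i : Fin n) :
    ∃ (α : Fin l1 → K) (β : Fin l2 → K) (s : Fin m → K),
      (∀ p, p ∉ I.χ i → s p = 0) ∧
      ∀ p : Fin m, (if p = I.f i then (1 : K) else 0) =
        (∑ t, extRow I.M1 G1 t p * α t) + (∑ t, extRow I.M2 G2 t p * β t) + s p := by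
  classical
  obtain ⟨D, hD⟩ := hcode i
  set C : Matrix ((Fin l1 ⊕ Fin l2) ⊕ ↥(I.χ i)) (Fin m) K := fun u p =>
    Sum.elim (Sum.elim (fun t => extRow I.M1 G1 t p) (fun t => extRow I.M2 G2 t p))
      (fun c => if p = c.1 then 1 else 0) u with hC
  set T := C.mulVecLin with hT
  have hrowsum : ∀ (x : Fin m → K) u, T x u = ∑ p, C u p * x p := by
    intro x u
    simp [hT, Matrix.mulVecLin_apply, Matrix.mulVec, dotProduct]
  have hker : ∀ x : Fin m → K, T x = 0 → x (I.f i) = 0 := by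
    intro x hx
    have h0 : ∀ u, (∑ p, C u p * x p) = 0 := fun u => by
      rw [← hrowsum x u, hx]; rfl
    have h1 : G1.mulVec (fun s : ↥I.M1 => x s.1) = 0 := by
      funext t
      rw [extRow_mulVec]
      have := h0 (Sum.inl (Sum.inl t))
      simpa [hC] using this
    have h2 : G2.mulVec (fun s : ↥I.M2 => x s.1) = 0 := by
      funext t
      rw [extRow_mulVec]
      have := h0 (Sum.inl (Sum.inr t))
      simpa [hC] using this
    have h3 : (fun c : ↥(I.χ i) => x c.1) = 0 := by
      funext c
      have := h0 (Sum.inr c)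
      simpa [hC, ite_mul, one_mul, zero_mul, Finset.sum_ite_eq', Finset.mem_univ] using this
    have hD0 : D 0 0 0 = 0 := by
      have h := hD 0
      have e1 : (fun j : ↥I.M1 => (0 : Fin m → K) j.1) = 0 := rfl
      have e2 : (fun j : ↥I.M2 => (0 : Fin m → K) j.1) = 0 := rfl
      have e3 : (fun j : ↥(I.χ i) => (0 : Fin m → K) j.1) = 0 := rfl
      rw [e1, e2, e3, Matrix.mulVec_zero, Matrix.mulVec_zero] at h
      exact h
    have := hD x
    rw [h1, h2, h3, hD0] at this
    exact this.symm
  let φ : (Fin m → K) →ₗ[K] K := LinearMap.proj (I.f i)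
  have hle : LinearMap.ker T ≤ LinearMap.ker φ := by
    intro x hx
    rw [LinearMap.mem_ker] at hx ⊢
    exact hker x hx
  let φbar : ((Fin m → K) ⧸ LinearMap.ker T) →ₗ[K] K := Submodule.liftQ _ φ hle
  let ψ₀ : ↥(LinearMap.range T) →ₗ[K] K := φbar.comp (T.quotKerEquivRange.symm : _ →ₗ[K] _)
  obtain ⟨ψ, hψ⟩ := LinearMap.exists_extend ψ₀
  have hfact : ∀ x, ψ (T x) = x (I.f i) := by
    intro x
    have h1 : ψ (T x) = ψ₀ ⟨T x, LinearMap.mem_range_self T x⟩ := by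
      rw [← hψ]; rfl
    rw [h1]
    show φbar (T.quotKerEquivRange.symm ⟨T x, LinearMap.mem_range_self T x⟩) = x (I.f i)
    rw [T.quotKerEquivRange_symm_apply_image x (LinearMap.mem_range_self T x)]
    rfl
  set ψu : ((Fin l1 ⊕ Fin l2) ⊕ ↥(I.χ i)) → K :=
    fun u => ψ (fun u' => if u = u' then 1 else 0) with hψu
  have h3 : ∀ (p : Fin m) u, T (fun q => if p = q then (1 : K) else 0) u = C u p := by
    intro p u
    rw [hrowsum]
    simp [mul_ite, mul_one, mul_zero, Finset.sum_ite_eq]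
  refine ⟨fun t => ψu (Sum.inl (Sum.inl t)), fun t => ψu (Sum.inl (Sum.inr t)),
    fun p => ∑ c : ↥(I.χ i), (if p = c.1 then 1 else 0) * ψu (Sum.inr c), ?_, ?_⟩
  · intro p hp
    refine Finset.sum_eq_zero fun c _ => ?_
    rw [if_neg (fun hc : p = c.1 => hp (hc ▸ c.2)), zero_mul]
  · intro p
    have h2 := hfact (fun q => if p = q then (1 : K) else 0)
    rw [LinearMap.pi_apply_eq_sum_univ ψ] at h2
    have h4 : (if p = I.f i then (1 : K) else 0)
        = ∑ u, C u p * ψu u := by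
      calc (if p = I.f i then (1 : K) else 0)
          = ∑ u, T (fun q => if p = q then (1 : K) else 0) u • ψu u := h2.symm
        _ = ∑ u, C u p * ψu u :=
            Finset.sum_congr rfl fun u _ => by rw [h3 p u, smul_eq_mul]
    rw [h4, Fintype.sum_sum_type, Fintype.sum_sum_type]
    simp only [hC, Sum.elim_inl, Sum.elim_inr]

lemma lower_bound_aux {l1 l2 : ℕ} (I : TGICP m n)
    (Q R : Set (Fin m)) (hQR : ∀ p, p ∈ Q → p ∉ R)
    (hint : (∀ i, I.f i ∈ Q → ∀ p ∈ I.χ i, p ∉ R) ∨ (∀ i, I.f i ∈ R → ∀ p ∈ I.χ i, p ∉ Q))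
    (G1 : Matrix (Fin l1) ↥I.M1 K) (G2 : Matrix (Fin l2) ↥I.M2 K)
    (hcode : I.IsCode K G1 G2) :
    I.mrk K Q + I.mrk K R ≤ l1 + l2 := by
  classical
  choose α β s hs hid using fun i => exists_decoding_vector I G1 G2 hcode i
  set rec' : {i : Fin n // I.f i ∈ Q} ⊕ {i : Fin n // I.f i ∈ R} → Fin n :=
    Sum.elim Subtype.val Subtype.val with hrec
  set col : ↥Q ⊕ ↥R → Fin m := Sum.elim Subtype.val Subtype.val with hcol
  set P : Matrix ({i : Fin n // I.f i ∈ Q} ⊕ {i : Fin n // I.f i ∈ R}) (Fin l1 ⊕ Fin l2) K :=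
    fun i u => Sum.elim (fun t => α (rec' i) t) (fun t => β (rec' i) t) u with hP
  set G : Matrix (Fin l1 ⊕ Fin l2) (↥Q ⊕ ↥R) K :=
    fun u c => Sum.elim (fun t => extRow I.M1 G1 t (col c))
      (fun t => extRow I.M2 G2 t (col c)) u with hG
  set F := P * G with hF
  have hFentry : ∀ i c, F i c =
      (if col c = I.f (rec' i) then 1 else 0) - s (rec' i) (col c) := by
    intro i c
    rw [hF, Matrix.mul_apply, Fintype.sum_sum_type]
    have hidc := hid (rec' i) (col c)
    rw [eq_sub_iff_add_eq]
    have h1 : ∑ t, P i (Sum.inl t) * G (Sum.inl t) c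
        = ∑ t, extRow I.M1 G1 t (col c) * α (rec' i) t :=
      Finset.sum_congr rfl fun t _ => mul_comm _ _
    have h2 : ∑ t, P i (Sum.inr t) * G (Sum.inr t) c
        = ∑ t, extRow I.M2 G2 t (col c) * β (rec' i) t :=
      Finset.sum_congr rfl fun t _ => mul_comm _ _
    rw [h1, h2]
    exact hidc.symm
  have hrankF : F.rank ≤ l1 + l2 := by
    calc F.rank ≤ G.rank := by rw [hF]; exact Matrix.rank_mul_le_right P G
      _ ≤ Fintype.card (Fin l1 ⊕ Fin l2) := Matrix.rank_le_card_height G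
      _ = l1 + l2 := by simp
  set A : Matrix {i : Fin n // I.f i ∈ Q} ↥Q K := fun i q => F (Sum.inl i) (Sum.inl q)
    with hA_def
  set B : Matrix {i : Fin n // I.f i ∈ R} ↥R K := fun i r => F (Sum.inr i) (Sum.inr r)
    with hB_def
  have hAcomp : Completes (fun i : {i : Fin n // I.f i ∈ Q} => (⟨I.f i.1, i.2⟩ : ↥Q))
      (fun i => {j : ↥Q | j.1 ∈ I.χ i.1}) A := by
    constructor
    · intro i
      rw [hA_def]
      show F (Sum.inl i) (Sum.inl ⟨I.f i.1, i.2⟩) = 1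
      rw [hFentry]
      have h0 : s i.1 (I.f i.1) = 0 := hs i.1 (I.f i.1) (I.not_mem i.1)
      show (if I.f i.1 = I.f i.1 then (1 : K) else 0) - s i.1 (I.f i.1) = 1
      rw [if_pos rfl, h0, sub_zero]
    · intro i j hj hjχ
      rw [hA_def]
      show F (Sum.inl i) (Sum.inl j) = 0
      rw [hFentry]
      have h1 : j.1 ≠ I.f i.1 := fun hc => hj (Subtype.ext hc)
      have h2 : s i.1 j.1 = 0 := hs i.1 j.1 (fun hc => hjχ hc)
      show (if j.1 = I.f i.1 then (1 : K) else 0) - s i.1 j.1 = 0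
      rw [if_neg h1, h2, sub_zero]
  have hBcomp : Completes (fun i : {i : Fin n // I.f i ∈ R} => (⟨I.f i.1, i.2⟩ : ↥R))
      (fun i => {j : ↥R | j.1 ∈ I.χ i.1}) B := by
    constructor
    · intro i
      rw [hB_def]
      show F (Sum.inr i) (Sum.inr ⟨I.f i.1, i.2⟩) = 1
      rw [hFentry]
      have h0 : s i.1 (I.f i.1) = 0 := hs i.1 (I.f i.1) (I.not_mem i.1)
      show (if I.f i.1 = I.f i.1 then (1 : K) else 0) - s i.1 (I.f i.1) = 1
      rw [if_pos rfl, h0, sub_zero]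
    · intro i j hj hjχ
      rw [hB_def]
      show F (Sum.inr i) (Sum.inr j) = 0
      rw [hFentry]
      have h1 : j.1 ≠ I.f i.1 := fun hc => hj (Subtype.ext hc)
      have h2 : s i.1 j.1 = 0 := hs i.1 j.1 (fun hc => hjχ hc)
      show (if j.1 = I.f i.1 then (1 : K) else 0) - s i.1 j.1 = 0
      rw [if_neg h1, h2, sub_zero]
  have hA : I.mrk K Q ≤ A.rank := by
    unfold TGICP.mrk minrk
    exact Nat.sInf_le ⟨A, hAcomp, rfl⟩
  have hB : I.mrk K R ≤ B.rank := by
    unfold TGICP.mrk minrk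
    exact Nat.sInf_le ⟨B, hBcomp, rfl⟩
  have hblocks : A.rank + B.rank ≤ F.rank := by
    rcases hint with hI | hI
    · have hX : F = Matrix.fromBlocks A 0 (fun i q => F (Sum.inr i) (Sum.inl q)) B := by
        ext (i | i) (c | c)
        · rfl
        · show F (Sum.inl i) (Sum.inr c) = 0
          rw [hFentry]
          have h1 : c.1 ≠ I.f i.1 := fun hc => hQR _ i.2 (hc ▸ c.2)
          have h2 : s i.1 c.1 = 0 := hs i.1 c.1 (fun hc => hI i.1 i.2 c.1 hc c.2)
          show (if c.1 = I.f i.1 then (1 : K) else 0) - s i.1 c.1 = 0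
          rw [if_neg h1, h2, sub_zero]
        · rfl
        · rfl
      calc A.rank + B.rank ≤ (Matrix.fromBlocks A 0
            (fun i q => F (Sum.inr i) (Sum.inl q)) B).rank :=
            rank_add_rank_le_fromBlocks_zero12 A _ B
        _ = F.rank := by rw [← hX]
    · have hX : F = Matrix.fromBlocks A (fun i r => F (Sum.inl i) (Sum.inr r)) 0 B := by
        ext (i | i) (c | c)
        · rfl
        · rfl
        · show F (Sum.inr i) (Sum.inl c) = 0
          rw [hFentry]
          have h1 : c.1 ≠ I.f i.1 := fun hc => hQR _ c.2 (hc.symm ▸ i.2)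
          have h2 : s i.1 c.1 = 0 := hs i.1 c.1 (fun hc => hI i.1 i.2 c.1 hc c.2)
          show (if c.1 = I.f i.1 then (1 : K) else 0) - s i.1 c.1 = 0
          rw [if_neg h1, h2, sub_zero]
        · rfl
      calc A.rank + B.rank ≤ (Matrix.fromBlocks A
            (fun i r => F (Sum.inl i) (Sum.inr r)) 0 B).rank :=
            rank_add_rank_le_fromBlocks_zero21 A _ B
        _ = F.rank := by rw [← hX]
  calc I.mrk K Q + I.mrk K R ≤ A.rank + B.rank := Nat.add_le_add hA hB
    _ ≤ F.rank := hblocks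
    _ ≤ l1 + l2 := hrankF

end Lower

/-- Case II-E optimality, Theorem 6(ii), digraphs `H_58`–`H_60`.
Under the hypotheses (a), (b), (c) of Statement 16 (see the documentation there), if
additionally `r_{j^c} ≥ r_{12}` and either no receiver with demand in `P_{j^c}` has side
information in `P_{12}` or no receiver with demand in `P_{12}` has side information in
`P_{j^c}`, then `l*_q(I) = r_{j^c} + r_{12}`. -/
theorem stmt17 (K : Type*) [Field K] [Fintype K] {m n : ℕ} (I : TGICP m n)
    (Pj Pjc : Set (Fin m))
    (hPchoice : (Pj = I.M1 \ I.M2 ∧ Pjc = I.M2 \ I.M1) ∨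
      (Pj = I.M2 \ I.M1 ∧ Pjc = I.M1 \ I.M2))
    (rj rjc r12 : ℕ)
    (hrj : rj = I.mrk K Pj) (hrjc : rjc = I.mrk K Pjc)
    (hr12 : r12 = I.mrk K (I.M1 ∩ I.M2))
    (hord : rj ≤ r12)
    (nj mj njc mjc n12 m12 : ℕ)
    (eRj : Fin nj ≃ {i : Fin n // I.f i ∈ Pj}) (eMj : Fin mj ≃ ↥Pj)
    (eRjc : Fin njc ≃ {i : Fin n // I.f i ∈ Pjc}) (eMjc : Fin mjc ≃ ↥Pjc)
    (eR12 : Fin n12 ≃ {i : Fin n // I.f i ∈ I.M1 ∩ I.M2})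
    (eM12 : Fin m12 ≃ ↥(I.M1 ∩ I.M2))
    (Fj : Matrix (Fin nj) (Fin mj) K) (Fjc : Matrix (Fin njc) (Fin mjc) K)
    (F12 : Matrix (Fin n12) (Fin m12) K)
    (hFj : SubCompletes I Pj eRj eMj Fj) (hFjc : SubCompletes I Pjc eRjc eMjc Fjc)
    (hF12 : SubCompletes I (I.M1 ∩ I.M2) eR12 eM12 F12)
    (hrkj : Fj.rank = rj) (hrkjc : Fjc.rank = rjc) (hrk12 : F12.rank = r12)
    (hnj : rj ≤ nj) (hnjc : rjc ≤ njc) (hn12 : r12 ≤ n12)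
    (Pjm : Matrix (Fin nj) (Fin rj) K) (Pjcm : Matrix (Fin njc) (Fin rjc) K)
    (P12m : Matrix (Fin n12) (Fin r12) K)
    (hPj : ∀ k : Fin nj, rj ≤ (k : ℕ) →
      ∀ c, Fj k c = ∑ t, Pjm k t * Fj (Fin.castLE hnj t) c)
    (hPjc : ∀ k : Fin njc, rjc ≤ (k : ℕ) →
      ∀ c, Fjc k c = ∑ t, Pjcm k t * Fjc (Fin.castLE hnjc t) c)
    (hP12 : ∀ k : Fin n12, r12 ≤ (k : ℕ) →
      ∀ c, F12 k c = ∑ t, P12m k t * F12 (Fin.castLE hn12 t) c)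
    (hJE1 : ∀ (k : Fin nj) (c : Fin mjc), (eMjc c).1 ∉ I.χ (eRj k).1 →
      stacked Pjm (padFirst rj rjc hnjc Fjc) k c = 0)
    (hJE2 : ∀ (k : Fin njc) (c : Fin mj), (eMj c).1 ∉ I.χ (eRjc k).1 →
      stacked Pjcm (padFirst rjc rj hnj Fj) k c = 0)
    (hc : ∀ (k : Fin n12) (c : Fin mj), (eMj c).1 ∉ I.χ (eR12 k).1 →
      stacked P12m (padFirst r12 rj hnj Fj) k c = 0)
    (hord2 : r12 ≤ rjc)
    (hint : (¬ ∃ i, I.f i ∈ Pjc ∧ ∃ p ∈ I.χ i, p ∈ I.M1 ∩ I.M2) ∨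
      (¬ ∃ i, I.f i ∈ I.M1 ∩ I.M2 ∧ ∃ p ∈ I.χ i, p ∈ Pjc)) :
    I.optLen K = rjc + r12 := by
  classical
  -- the two `hint` forms, rephrased
  have hint' : (∀ i, I.f i ∈ Pjc → ∀ p ∈ I.χ i, p ∉ I.M1 ∩ I.M2) ∨
      (∀ i, I.f i ∈ I.M1 ∩ I.M2 → ∀ p ∈ I.χ i, p ∉ Pjc) := by
    rcases hint with h | h
    · exact Or.inl fun i hQ p hp hR => h ⟨i, hQ, p, hp, hR⟩
    · exact Or.inr fun i hQ p hp hR => h ⟨i, hQ, p, hp, hR⟩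
  have hQR : ∀ p, p ∈ Pjc → p ∉ I.M1 ∩ I.M2 := by
    rcases hPchoice with ⟨hPj', hPjc'⟩ | ⟨hPj', hPjc'⟩
    · intro p hp hcon
      rw [hPjc'] at hp
      exact hp.2 hcon.1
    · intro p hp hcon
      rw [hPjc'] at hp
      exact hp.2 hcon.2
  -- membership: a code of aggregate length rjc + r12 exists
  have hmem : (rjc + r12) ∈ {L | ∃ (l1 l2 : ℕ) (G1 : Matrix (Fin l1) ↥I.M1 K)
      (G2 : Matrix (Fin l2) ↥I.M2 K), I.IsCode K G1 G2 ∧ L = l1 + l2} := by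
    rcases hPchoice with ⟨hPj', hPjc'⟩ | ⟨hPj', hPjc'⟩
    · obtain ⟨Ga, Gb, hDec⟩ := exists_code_aux I I.M1 I.M2 I.cover rfl Pj Pjc hPj' hPjc'
        rj rjc r12 hord hord2 eRj eMj eRjc eMjc eR12 eM12 Fj Fjc F12 hFj hFjc hF12
        hnj hnjc hn12 Pjm Pjcm P12m hPj hPjc hP12 hJE1 hJE2 hc
      exact ⟨r12, rjc, Ga, Gb, hDec, (Nat.add_comm rjc r12)⟩
    · obtain ⟨Ga, Gb, hDec⟩ := exists_code_aux I I.M2 I.M1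
        (by rw [Set.union_comm]; exact I.cover) (Set.inter_comm _ _) Pj Pjc hPj' hPjc'
        rj rjc r12 hord hord2 eRj eMj eRjc eMjc eR12 eM12 Fj Fjc F12 hFj hFjc hF12
        hnj hnjc hn12 Pjm Pjcm P12m hPj hPjc hP12 hJE1 hJE2 hc
      refine ⟨rjc, r12, Gb, Ga, ?_, rfl⟩
      intro i
      obtain ⟨D, hD⟩ := hDec i
      exact ⟨fun y1 y2 s => D y2 y1 s, fun x => hD x⟩
  -- lower bound
  have hlb : ∀ L ∈ {L | ∃ (l1 l2 : ℕ) (G1 : Matrix (Fin l1) ↥I.M1 K)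
      (G2 : Matrix (Fin l2) ↥I.M2 K), I.IsCode K G1 G2 ∧ L = l1 + l2},
      rjc + r12 ≤ L := by
    rintro L ⟨l1, l2, G1, G2, hcode, rfl⟩
    have := lower_bound_aux I Pjc (I.M1 ∩ I.M2) hQR hint' G1 G2 hcode
    rw [← hrjc, ← hr12] at this
    exact this
  exact le_antisymm (Nat.sInf_le hmem) (le_csInf ⟨_, hmem⟩ hlb)
end
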